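/- arXiv:1510.07792 — 6 statements merged into one kernel-verified Lean document; each statement's English description precedes it below -/
import Mathlib

section
/- Let $\{a_k\}_{k\in\mathbb{Z}\setminus\{0\}}\in\ell^2$ and for each $n\in\mathbb{Z}$ let $z_n$ be a complex number with $z_n\notin\pi\mathbb{Z}$ and $\sup_n |z_n - \pi n| < \infty$ and $\inf_{k\ne n}|z_n - \pi k| \ge c > 0$. Then the sequence $s_n = \sum_{k\ne n} \frac{a_k}{z_n - \pi k}$ belongs to $\ell^2$, i.e. $\sum_{n\in\mathbb{Z}} |s_n|^2 < \infty$. -/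
/-!
Writing `z_n - π k = π (n - k) + (z_n - π n)`, the kernel `1 / (z_n - π k)` differs from the
discrete Hilbert kernel `1 / (π (n - k))` by `O(1 / (n - k)²)`, uniformly in `n` thanks to the
separation constant `c`. A summable Toeplitz kernel acts boundedly on `ℓ²` (Young's inequality,
via a weighted Cauchy–Schwarz). The discrete Hilbert transform is bounded on `ℓ²` because
`-1 / (2π i j)` are the Fourier coefficients of the bounded sawtooth `B₁({x})`: convolving with
them is multiplication by `B₁({x})` on `L²(ℝ/ℤ)`.
-/

open Real MeasureTheory Complex ComplexConjugate
open scoped ENNReal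

section WeightedCauchySchwarz

variable {ι : Type*} {w b : ι → ℝ}

lemma summable_mul_of_summable_mul_sq (hw : ∀ i, 0 ≤ w i) (hb : ∀ i, 0 ≤ b i) (hws : Summable w)
    (hwb : Summable fun i => w i * b i ^ 2) : Summable fun i => w i * b i :=
  .of_nonneg_of_le (fun i => mul_nonneg (hw i) (hb i))
    (fun i => by nlinarith [hw i, mul_nonneg (hw i) (sq_nonneg (b i - 1))])
    ((hws.add hwb).div_const 2)

lemma sq_tsum_mul_le (hw : ∀ i, 0 ≤ w i) (hb : ∀ i, 0 ≤ b i) (hws : Summable w)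
    (hwb : Summable fun i => w i * b i ^ 2) :
    (∑' i, w i * b i) ^ 2 ≤ (∑' i, w i) * ∑' i, w i * b i ^ 2 := by
  refine le_of_tendsto' ((summable_mul_of_summable_mul_sq hw hb hws hwb).hasSum.pow 2) fun s => ?_
  calc (∑ i ∈ s, w i * b i) ^ 2 ≤ (∑ i ∈ s, w i) * ∑ i ∈ s, w i * b i ^ 2 :=
        Finset.sum_sq_le_sum_mul_sum_of_sq_le_mul s (fun i _ => hw i)
          (fun i _ => mul_nonneg (hw i) (sq_nonneg _)) fun i _ => le_of_eq (by ring)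
    _ ≤ (∑' i, w i) * ∑' i, w i * b i ^ 2 :=
        mul_le_mul (hws.sum_le_tsum s fun i _ => hw i)
          (hwb.sum_le_tsum s fun i _ => mul_nonneg (hw i) (sq_nonneg _))
          (Finset.sum_nonneg fun i _ => mul_nonneg (hw i) (sq_nonneg _)) (tsum_nonneg hw)

end WeightedCauchySchwarz

lemma summable_mul_of_summable_norm_sq {ι R : Type*} [NormedRing R] [CompleteSpace R]
    {f g : ι → R} (hf : Summable fun i => ‖f i‖ ^ 2) (hg : Summable fun i => ‖g i‖ ^ 2) :
    Summable fun i => f i * g i :=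
  .of_norm_bounded ((hf.add hg).div_const 2) fun i =>
    (norm_mul_le _ _).trans (by nlinarith [sq_nonneg (‖f i‖ - ‖g i‖)])

section Convolution

variable {G : Type*} [AddCommGroup G] {w b : G → ℝ}

lemma summable_mul_sq_sub (hw : ∀ j, 0 ≤ w j) (hws : Summable w)
    (hbs : Summable fun k => b k ^ 2) : Summable fun p : G × G => w (p.1 - p.2) * b p.2 ^ 2 := by
  let shear : G × G ≃ G × G :=
    ⟨fun p => (p.1 + p.2, p.2), fun p => (p.1 - p.2, p.2), fun p => by simp, fun p => by simp⟩
  refine shear.summable_iff.mp ?_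
  simpa [shear, Function.comp_def] using hws.mul_of_nonneg hbs hw fun k => sq_nonneg (b k)

lemma summable_mul_sub (hw : ∀ j, 0 ≤ w j) (hb : ∀ k, 0 ≤ b k) (hws : Summable w)
    (hbs : Summable fun k => b k ^ 2) (n : G) : Summable fun k => w (n - k) * b k := by
  obtain ⟨hfiber, -⟩ := (summable_prod_of_nonneg fun p => mul_nonneg (hw _) (sq_nonneg _)).mp
    (summable_mul_sq_sub hw hws hbs)
  exact summable_mul_of_summable_mul_sq (w := fun k => w (n - k)) (fun k => hw _) hb
    ((Equiv.subLeft n).summable_iff.mpr hws) (hfiber n)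

lemma summable_sq_tsum_mul_sub (hw : ∀ j, 0 ≤ w j) (hb : ∀ k, 0 ≤ b k) (hws : Summable w)
    (hbs : Summable fun k => b k ^ 2) : Summable fun n => (∑' k, w (n - k) * b k) ^ 2 := by
  obtain ⟨hfiber, hbase⟩ := (summable_prod_of_nonneg fun p => mul_nonneg (hw _) (sq_nonneg _)).mp
    (summable_mul_sq_sub hw hws hbs)
  refine .of_nonneg_of_le (fun n => sq_nonneg _) (fun n => ?_) (hbase.mul_left (∑' j, w j))
  calc (∑' k, w (n - k) * b k) ^ 2 ≤ (∑' k, w (n - k)) * ∑' k, w (n - k) * b k ^ 2 :=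
        sq_tsum_mul_le (w := fun k => w (n - k)) (fun k => hw _) hb
          ((Equiv.subLeft n).summable_iff.mpr hws) (hfiber n)
    _ = (∑' j, w j) * ∑' k, w (n - k) * b k ^ 2 := by
        congr 1; exact (Equiv.subLeft n).tsum_eq w

lemma summable_sq_norm_tsum_of_norm_sub_le {E : Type*} [NormedAddCommGroup E] [CompleteSpace E]
    {u v : G → G → E} (hw : ∀ j, 0 ≤ w j) (hb : ∀ k, 0 ≤ b k) (hws : Summable w)
    (hbs : Summable fun k => b k ^ 2) (hu : ∀ n, Summable (u n))
    (hus : Summable fun n => ‖∑' k, u n k‖ ^ 2) (huv : ∀ n k, ‖v n k - u n k‖ ≤ w (n - k) * b k) :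
    Summable fun n => ‖∑' k, v n k‖ ^ 2 := by
  refine .of_nonneg_of_le (fun n => sq_nonneg _) (fun n => ?_)
    ((hus.add (summable_sq_tsum_mul_sub hw hb hws hbs)).mul_left 2)
  have hconv := summable_mul_sub hw hb hws hbs n
  have hvu : Summable fun k => v n k - u n k := .of_norm_bounded hconv (huv n)
  have hle : ‖∑' k, v n k‖ ≤ ‖∑' k, u n k‖ + ∑' k, w (n - k) * b k :=
    calc ‖∑' k, v n k‖ = ‖∑' k, u n k + ∑' k, (v n k - u n k)‖ := by
          rw [← (hu n).tsum_add hvu]; simp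
      _ ≤ ‖∑' k, u n k‖ + ∑' k, w (n - k) * b k :=
          (norm_add_le _ _).trans (add_le_add le_rfl (tsum_of_norm_bounded hconv.hasSum (huv n)))
  have hconv0 : 0 ≤ ∑' k, w (n - k) * b k := tsum_nonneg fun k => mul_nonneg (hw _) (hb k)
  nlinarith [norm_nonneg (∑' k, v n k), sq_nonneg (‖∑' k, u n k‖ - ∑' k, w (n - k) * b k)]

end Convolution

lemma norm_inv_sub_sub_inv_sub_le {𝕜 : Type*} [NormedField 𝕜] {z p q : 𝕜} {B c : ℝ}
    (hc : 0 < c) (hzp : ‖z - p‖ ≤ B) (hzq : c ≤ ‖z - q‖) (hpq : p ≠ q) :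
    ‖(z - q)⁻¹ - (p - q)⁻¹‖ ≤ B * (c + B) / c * ‖(p - q)⁻¹‖ ^ 2 := by
  have hzq0 : z - q ≠ 0 := norm_pos_iff.mp (hc.trans_le hzq)
  have hpq0 : 0 < ‖p - q‖ := norm_pos_iff.mpr (sub_ne_zero.mpr hpq)
  have hB : 0 ≤ B := (norm_nonneg _).trans hzp
  have htri : ‖p - q‖ ≤ B + ‖z - q‖ :=
    calc ‖p - q‖ = ‖(p - z) + (z - q)‖ := by ring_nf
      _ ≤ B + ‖z - q‖ := (norm_add_le _ _).trans (by rw [norm_sub_rev]; gcongr)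
  have hpq_le : c * ‖p - q‖ ≤ (c + B) * ‖z - q‖ := by
    nlinarith [mul_le_mul_of_nonneg_left htri hc.le, mul_le_mul_of_nonneg_left hzq hB]
  calc ‖(z - q)⁻¹ - (p - q)⁻¹‖ = ‖z - p‖ / (‖z - q‖ * ‖p - q‖) := by
        rw [inv_sub_inv hzq0 (sub_ne_zero.mpr hpq), sub_sub_sub_cancel_right, norm_div, norm_mul,
          norm_sub_rev p z]
    _ ≤ B * (c + B) / (c * ‖p - q‖ ^ 2) := by
        rw [div_le_div_iff₀ (by positivity) (by positivity)]
        nlinarith [mul_le_mul_of_nonneg_left hpq_le hB, mul_le_mul_of_nonneg_right hzp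
          (by positivity : 0 ≤ c * ‖p - q‖ ^ 2)]
    _ = B * (c + B) / c * ‖(p - q)⁻¹‖ ^ 2 := by
        rw [norm_inv, inv_pow, div_mul_eq_div_div, div_eq_mul_inv _ (‖p - q‖ ^ 2)]

namespace AddCircle

variable {T : ℝ} [Fact (0 < T)]

lemma fourierCoeff_conj_mul_fourier (m : AddCircle T → ℂ) (n k : ℤ) :
    fourierCoeff (fun x => conj (m x) * fourier n x) k = conj (fourierCoeff m (n - k)) := by
  simp only [fourierCoeff, smul_eq_mul, ← integral_conj, map_mul]
  refine integral_congr_ae (Filter.Eventually.of_forall fun x => ?_)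
  dsimp only
  rw [← fourier_neg, neg_neg, sub_eq_neg_add, fourier_add]
  ring

/-- The `n`-th coefficient of `m f` is `⟪conj m · fourier n, f⟫`, which Parseval expands in the
Fourier basis. -/
lemma fourierCoeff_mul_eq_tsum {m : AddCircle T → ℂ} (hm : MemLp m ∞ haarAddCircle)
    (f : Lp ℂ 2 (haarAddCircle (T := T))) (n : ℤ) :
    fourierCoeff (fun x => m x * f x) n = ∑' k, fourierCoeff m (n - k) * fourierCoeff f k := by
  have hu : MemLp (fun x => conj (m x) * fourier n x) 2 haarAddCircle :=
    ((BoundedContinuousFunction.mkOfCompact (fourier n)).memLp_top.mul' hm.star).mono_exponent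
      le_top
  calc fourierCoeff (fun x => m x * f x) n = inner ℂ (hu.toLp _) f := by
        rw [L2.inner_def]
        refine integral_congr_ae ?_
        filter_upwards [hu.coeFn_toLp] with x hx
        rw [hx, RCLike.inner_apply, map_mul, conj_conj, ← fourier_neg, smul_eq_mul]
        ring
    _ = ∑' k, fourierCoeff m (n - k) * fourierCoeff f k := by
        rw [← fourierBasis.repr.inner_map_map, lp.inner_eq_tsum]
        refine tsum_congr fun k => ?_
        simp only [fourierBasis_repr, fourierCoeff_congr_ae hu.coeFn_toLp,
          fourierCoeff_conj_mul_fourier, RCLike.inner_apply, conj_conj]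
        ring

lemma summable_sq_norm_tsum_fourierCoeff_mul {m : AddCircle T → ℂ} (hm : MemLp m ∞ haarAddCircle)
    {a : ℤ → ℂ} (ha : Summable fun k => ‖a k‖ ^ 2) :
    Summable fun n => ‖∑' k, fourierCoeff m (n - k) * a k‖ ^ 2 := by
  set f := (fourierBasis (T := T)).repr.symm ⟨a, memℓp_gen (by simpa using ha)⟩
  have hfa : ∀ k, fourierCoeff f k = a k := fun k => by
    rw [← fourierBasis_repr, LinearIsometryEquiv.apply_symm_apply]
  have hmf : MemLp (fun x => m x * f x) 2 haarAddCircle := (Lp.memLp f).mul' hm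
  refine (hasSum_sq_fourierCoeff (hmf.toLp _)).summable.congr fun n => ?_
  rw [fourierCoeff_congr_ae hmf.coeFn_toLp, fourierCoeff_mul_eq_tsum hm]
  simp only [hfa]

end AddCircle

open AddCircle

lemma memLp_top_periodizedBernoulli_one :
    MemLp ((↑) ∘ periodizedBernoulli 1 : UnitAddCircle → ℂ) ∞ haarAddCircle := by
  have hmeas : Measurable (periodizedBernoulli 1) :=
    (Polynomial.continuous _).measurable.comp
      (measurable_subtype_coe.comp (measurableEquivIco 1 0).measurable)
  refine memLp_top_of_bound (continuous_ofReal.measurable.comp hmeas).aestronglyMeasurable 1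
    (.of_forall fun x => ?_)
  obtain ⟨hx0, hx1⟩ := (equivIco 1 0 x).2
  simp only [Function.comp_apply, norm_real, Real.norm_eq_abs, abs_le]
  change -1 ≤ bernoulliFun 1 (equivIco 1 0 x) ∧ bernoulliFun 1 (equivIco 1 0 x) ≤ 1
  rw [bernoulliFun_one]
  constructor <;> linarith

-- The diagonal term `k = n` drops out because `(0 : ℂ)⁻¹ = 0`.
lemma summable_sq_norm_tsum_mul_inv_int_sub {a : ℤ → ℂ} (ha : Summable fun k => ‖a k‖ ^ 2) :
    Summable fun n : ℤ => ‖∑' k, a k * ((n - k : ℤ) : ℂ)⁻¹‖ ^ 2 := by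
  have hkernel : ∀ j : ℤ, (j : ℂ)⁻¹ =
      -(2 * π * I) * fourierCoeff ((↑) ∘ periodizedBernoulli 1 : UnitAddCircle → ℂ) j := by
    intro j
    have h2πI : (2 * π * I : ℂ) ≠ 0 := by simp [Real.pi_ne_zero, I_ne_zero]
    rw [fourierCoeff_bernoulli_eq one_ne_zero, pow_one, Nat.factorial_one, Nat.cast_one,
      neg_div, one_div, mul_inv, neg_mul_neg, ← mul_assoc, mul_inv_cancel₀ h2πI, one_mul]
  refine ((summable_sq_norm_tsum_fourierCoeff_mul memLp_top_periodizedBernoulli_one ha).mul_left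
    (‖2 * π * I‖ ^ 2)).congr fun n => ?_
  have hsum : ∑' k, a k * ((n - k : ℤ) : ℂ)⁻¹ = -(2 * π * I) *
      ∑' k, fourierCoeff ((↑) ∘ periodizedBernoulli 1 : UnitAddCircle → ℂ) (n - k) * a k := by
    rw [← tsum_mul_left]
    exact tsum_congr fun k => by rw [hkernel]; ring
  rw [hsum, norm_mul (-_), norm_neg, mul_pow]

lemma summable_norm_inv_mul_int_sq (h : ℂ) : Summable fun j : ℤ => ‖(h * j)⁻¹‖ ^ 2 :=
  (((summable_one_div_int_pow (p := 2)).mpr one_lt_two).mul_left (‖h⁻¹‖ ^ 2)).congr fun j => by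
    simp only [mul_inv, norm_mul, norm_inv, norm_intCast, mul_pow, inv_pow, sq_abs, one_div]

lemma norm_indicator_inv_sub_inv_pi_mul_sub_le {z : ℂ} {n : ℤ} {B c : ℝ} (hc : 0 < c)
    (hB : ‖z - π * n‖ ≤ B) (hsep : ∀ k : ℤ, k ≠ n → c ≤ ‖z - π * k‖) (k : ℤ) :
    ‖{k : ℤ | k ≠ n}.indicator (fun k : ℤ => (z - π * k)⁻¹) k - ((π : ℂ) * (n - k : ℤ))⁻¹‖ ≤
      B * (c + B) / c * ‖((π : ℂ) * (n - k : ℤ))⁻¹‖ ^ 2 := by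
  rcases eq_or_ne k n with rfl | hk
  · simp
  have hlattice : (π : ℂ) * n - π * k = π * (n - k : ℤ) := by push_cast; ring
  have hne : (π : ℂ) * n ≠ π * k := by simp [pi_ne_zero, hk.symm]
  rw [Set.indicator_of_mem hk, ← hlattice]
  exact norm_inv_sub_sub_inv_sub_le hc hB (hsep k hk) hne

theorem stmt_1_general (a : ℤ → ℂ) (z : ℤ → ℂ) (B c : ℝ)
    (ha : Summable (fun k => ‖a k‖ ^ 2))
    (hB : ∀ n : ℤ, ‖z n - (π : ℂ) * n‖ ≤ B)
    (hc : 0 < c)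
    (hsep : ∀ n k : ℤ, k ≠ n → c ≤ ‖z n - (π : ℂ) * k‖) :
    Summable (fun n : ℤ =>
      ‖∑' k : {k : ℤ // k ≠ n}, a k / (z n - (π : ℂ) * (k : ℤ))‖ ^ 2) := by
  have hB0 : 0 ≤ B := (norm_nonneg _).trans (hB 0)
  have hκ := summable_norm_inv_mul_int_sq π
  have hu : ∀ n : ℤ, Summable fun k : ℤ => a k * ((π : ℂ) * (n - k : ℤ))⁻¹ := fun n =>
    summable_mul_of_summable_norm_sq ha (hκ.comp_injective sub_right_injective)
  have hus : Summable fun n : ℤ => ‖∑' k, a k * ((π : ℂ) * (n - k : ℤ))⁻¹‖ ^ 2 := by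
    refine ((summable_sq_norm_tsum_mul_inv_int_sub ha).mul_left (‖(π : ℂ)⁻¹‖ ^ 2)).congr
      fun n => ?_
    simp only [mul_inv, mul_left_comm (a _), tsum_mul_left, norm_mul, mul_pow]
  have huv : ∀ n k : ℤ,
      ‖a k * {k : ℤ | k ≠ n}.indicator (fun k : ℤ => (z n - π * k)⁻¹) k -
        a k * ((π : ℂ) * (n - k : ℤ))⁻¹‖ ≤
      B * (c + B) / c * ‖((π : ℂ) * (n - k : ℤ))⁻¹‖ ^ 2 * ‖a k‖ := fun n k => by
    rw [← mul_sub, norm_mul, mul_comm]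
    exact mul_le_mul_of_nonneg_right
      (norm_indicator_inv_sub_inv_pi_mul_sub_le hc (hB n) (hsep n) k) (norm_nonneg (a k))
  refine (summable_sq_norm_tsum_of_norm_sub_le (G := ℤ)
    (w := fun j => B * (c + B) / c * ‖((π : ℂ) * j)⁻¹‖ ^ 2) (b := fun k => ‖a k‖)
    (fun j => by positivity) (fun k => norm_nonneg (a k))
    (hκ.mul_left (B * (c + B) / c)) ha hu hus huv).congr fun n => ?_
  simp_rw [← Set.indicator_mul_right, ← div_eq_mul_inv, ← tsum_subtype]
  rfl

theorem stmt_1 (a : ℤ → ℂ) (z : ℤ → ℂ) (B c : ℝ)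
    (ha0 : a 0 = 0)
    (ha : Summable (fun k => ‖a k‖ ^ 2))
    (hz : ∀ n : ℤ, ∀ m : ℤ, z n ≠ (π : ℂ) * m)
    (hB : ∀ n : ℤ, ‖z n - (π : ℂ) * n‖ ≤ B)
    (hc : 0 < c)
    (hsep : ∀ n k : ℤ, k ≠ n → c ≤ ‖z n - (π : ℂ) * k‖) :
    Summable (fun n : ℤ =>
      ‖∑' k : {k : ℤ // k ≠ n}, a k / (z n - (π : ℂ) * (k : ℤ))‖ ^ 2) :=
  stmt_1_general a z B c ha hB hc hsep
end

section
/- Let $E(z) = \frac{(32 z^2 - 25\pi^2) i e^{-iz} - 7\pi^2 i e^{iz}}{32 (z^2 - \pi^2)}$. Then $E$ extends to an entire function (the singularities at $z = \pm\pi$ are removable), and every zero $z_0$ of $E$ satisfies $\operatorname{Im} z_0 < 0$. -/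
/-!
Written as `E z = (z² - 9π²/16) sin z / (z² - π²) + i cos z`, the numerator vanishes at `±π`, so
dividing it twice by `dslope` gives an entire function, and `Im E x = cos x` on the real axis
(by continuity also at `±π`, where it is `-1`, so `E (±π) ≠ 0`).

Away from `±π`, `E z = 0` means `32 z² - 25π² = 7π² e^{2iz}`. If `y = Im z ≥ 0`, the right side has
modulus at most `7π²`, which forces `9π²/16 ≤ x² ≤ π²` for `x = Re z`. The imaginary parts give
`64 x y = 7π² e^{-2y} sin 2x`, while `x sin 2x < 0` for `π/2 < |x| < π`; hence `x² = π²` and `y = 0`,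
that is `z = ±π`.
-/

open Real Complex

theorem dslope_dslope_eq_div {𝕜 : Type*} [NontriviallyNormedField 𝕜] {f : 𝕜 → 𝕜} {a b z : 𝕜}
    (ha : f a = 0) (hb : f b = 0) (hba : b ≠ a) (hza : z ≠ a) (hzb : z ≠ b) :
    dslope (dslope f a) b z = f z / ((z - a) * (z - b)) := by
  rw [dslope_of_ne _ hzb, slope_def_field, dslope_of_ne _ hza, dslope_of_ne _ hba,
    slope_def_field, slope_def_field, ha, hb]
  simp [div_div]

theorem Real.mul_sin_two_mul_neg {x : ℝ} (h₁ : π / 2 < |x|) (h₂ : |x| < π) :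
    x * Real.sin (2 * x) < 0 := by
  have hsin : 0 < x * Real.sin x := by
    rcases le_or_gt 0 x with hx | hx
    · rw [abs_of_nonneg hx] at h₁ h₂
      exact mul_pos (by linarith) (Real.sin_pos_of_pos_of_lt_pi (by linarith) h₂)
    · rw [abs_of_neg hx] at h₁ h₂
      have := Real.sin_pos_of_pos_of_lt_pi (by linarith) h₂
      rw [Real.sin_neg] at this
      nlinarith
  have hcos : Real.cos x < 0 := by
    rw [← Real.cos_abs]; exact Real.cos_neg_of_pi_div_two_lt_of_lt h₁ (by linarith)
  rw [Real.sin_two_mul]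
  nlinarith

namespace DeBrangesExample

noncomputable def numerator (z : ℂ) : ℂ :=
  (z ^ 2 - 9 * π ^ 2 / 16) * sin z + I * (z ^ 2 - π ^ 2) * cos z

noncomputable def E : ℂ → ℂ := dslope (dslope numerator π) (-π)

theorem numerator_pi : numerator π = 0 := by simp [numerator]
theorem numerator_neg_pi : numerator (-π) = 0 := by simp [numerator]

theorem differentiable_numerator : Differentiable ℂ numerator := by
  unfold numerator; fun_prop

theorem differentiable_E : Differentiable ℂ E := by
  simpa [E, ← differentiableOn_univ, Complex.differentiableOn_dslope Filter.univ_mem]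
    using differentiable_numerator

theorem E_eq_div {z : ℂ} (h₁ : z ≠ π) (h₂ : z ≠ -π) :
    E z = numerator z / ((z - π) * (z + π)) := by
  rw [E, dslope_dslope_eq_div numerator_pi numerator_neg_pi
    (by simp [CharZero.neg_eq_self_iff, Real.pi_ne_zero]) h₁ h₂, sub_neg_eq_add]

theorem thirty_two_mul_numerator (z : ℂ) :
    32 * numerator z = (32 * z ^ 2 - 25 * π ^ 2) * I * exp (-I * z)
      - 7 * π ^ 2 * I * exp (I * z) := by
  rw [show -I * z = -z * I by ring, mul_comm I z, ← cos_sub_sin_I, ← cos_add_sin_I, numerator]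
  linear_combination (32 * z ^ 2 * sin z - 18 * π ^ 2 * sin z) * I_sq

theorem E_ofReal_im (x : ℝ) : (E x).im = Real.cos x := by
  have hdense : Dense ((Set.univ : Set ℝ) \ {π, -π}) :=
    dense_univ.sdiff_finite (Set.toFinite _)
  refine congrFun (Continuous.ext_on hdense (f := fun x : ℝ => (E x).im) ?_ ?_ ?_) x
  · exact Complex.continuous_im.comp (differentiable_E.continuous.comp continuous_ofReal)
  · exact Real.continuous_cos
  rintro t ⟨-, ht⟩
  simp only [Set.mem_insert_iff, Set.mem_singleton_iff, not_or] at ht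
  have h₁ : (t : ℂ) ≠ π := by exact_mod_cast ht.1
  have h₂ : (t : ℂ) ≠ -π := by exact_mod_cast ht.2
  have hsub : (t : ℂ) - π ≠ 0 := sub_ne_zero.2 h₁
  have hadd : (t : ℂ) + π ≠ 0 := by rwa [← sub_neg_eq_add, sub_ne_zero]
  have : E t = ((t ^ 2 - 9 * π ^ 2 / 16) * Real.sin t / ((t - π) * (t + π)) : ℝ)
      + (Real.cos t : ℝ) * I := by
    rw [E_eq_div h₁ h₂, numerator]
    push_cast
    field_simp
    ring
  show (E t).im = _
  rw [this]
  simp only [add_im, ofReal_im, mul_im, ofReal_re, I_re, I_im, mul_zero, mul_one, zero_add, add_zero]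

theorem sq_eq_exp_of_numerator_eq_zero {z : ℂ} (h : numerator z = 0) :
    32 * z ^ 2 - 25 * π ^ 2 = 7 * π ^ 2 * exp (2 * I * z) := by
  have h32 := thirty_two_mul_numerator z
  rw [h, mul_zero] at h32
  have hinv : exp (-I * z) * exp (I * z) = 1 := by rw [← Complex.exp_add]; simp
  have hsq : exp (I * z) ^ 2 = exp (2 * I * z) := by rw [← Complex.exp_nat_mul]; ring_nf
  linear_combination (I * exp (I * z)) * h32 - (32 * z ^ 2 - 25 * π ^ 2) * hinv
    + 7 * π ^ 2 * hsq + ((32 * z ^ 2 - 25 * π ^ 2) * exp (-I * z) * exp (I * z)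
      - 7 * π ^ 2 * exp (I * z) ^ 2) * I_sq

theorem sq_re_bounds_of_sq_eq_exp {z : ℂ}
    (h : 32 * z ^ 2 - 25 * π ^ 2 = 7 * π ^ 2 * exp (2 * I * z)) (hz : 0 ≤ z.im) :
    9 * π ^ 2 / 16 + z.im ^ 2 ≤ z.re ^ 2 ∧ z.re ^ 2 + z.im ^ 2 ≤ π ^ 2 := by
  have hnorm : ‖32 * z ^ 2 - 25 * π ^ 2‖ ≤ 7 * π ^ 2 := by
    rw [h, norm_mul, Complex.norm_exp]
    have hexp : Real.exp (2 * I * z).re ≤ 1 := Real.exp_le_one_iff.2 (by simp; linarith)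
    have h7 : ‖(7 * π ^ 2 : ℂ)‖ = 7 * π ^ 2 := by norm_cast; simp [abs_of_pos pi_pos]
    rw [h7]
    nlinarith [pi_pos]
  constructor
  · have hre := (abs_le.1 (abs_re_le_norm (32 * z ^ 2 - 25 * π ^ 2))).1
    have hw : (32 * z ^ 2 - 25 * π ^ 2).re = 32 * (z.re ^ 2 - z.im ^ 2) - 25 * π ^ 2 := by
      simp [sq]
    linarith
  · have htri := norm_sub_norm_le (32 * z ^ 2) (25 * π ^ 2 : ℂ)
    have h32 : ‖32 * z ^ 2‖ = 32 * (z.re ^ 2 + z.im ^ 2) := by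
      rw [norm_mul, norm_pow, Complex.sq_norm, Complex.normSq_apply]; norm_num; ring
    have h25 : ‖(25 * π ^ 2 : ℂ)‖ = 25 * π ^ 2 := by norm_cast; simp [abs_of_pos pi_pos]
    linarith

theorem eq_pi_or_eq_neg_pi_of_sq_eq_exp {z : ℂ}
    (h : 32 * z ^ 2 - 25 * π ^ 2 = 7 * π ^ 2 * exp (2 * I * z)) (hz : 0 ≤ z.im) :
    z = π ∨ z = -π := by
  obtain ⟨hre, hmod⟩ := sq_re_bounds_of_sq_eq_exp h hz
  have him : 64 * z.re * z.im = 7 * π ^ 2 * Real.exp (-(2 * z.im)) * Real.sin (2 * z.re) := by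
    have := congrArg im h
    simp [sq, exp_im] at this
    linarith
  have hx : z.re ^ 2 = π ^ 2 := by
    by_contra hne
    have hlt : z.re ^ 2 < π ^ 2 := lt_of_le_of_ne (by nlinarith) hne
    have hlow : π / 2 < |z.re| := by
      have := sq_lt_sq.1 (show (π / 2) ^ 2 < z.re ^ 2 by nlinarith)
      rwa [abs_of_pos (by positivity)] at this
    have hsin : z.re * Real.sin (2 * z.re) < 0 :=
      Real.mul_sin_two_mul_neg hlow (abs_lt_of_sq_lt_sq hlt pi_pos.le)
    have hneg : 7 * π ^ 2 * Real.exp (-(2 * z.im)) * (z.re * Real.sin (2 * z.re)) < 0 :=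
      mul_neg_of_pos_of_neg (by positivity) hsin
    have : 0 ≤ 64 * z.re ^ 2 * z.im := by positivity
    linarith [show 64 * z.re ^ 2 * z.im
      = 7 * π ^ 2 * Real.exp (-(2 * z.im)) * (z.re * Real.sin (2 * z.re)) by
        linear_combination z.re * him]
  have hy : z.im = 0 := by nlinarith
  rcases eq_or_eq_neg_of_sq_eq_sq _ _ hx with hπ | hπ
  · left; apply Complex.ext <;> simp [hπ, hy]
  · right; apply Complex.ext <;> simp [hπ, hy]

theorem im_neg_of_E_eq_zero {z : ℂ} (hz : E z = 0) : z.im < 0 := by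
  by_contra! hy
  by_cases h₁ : z = π
  · simpa [h₁, E_ofReal_im] using congrArg im hz
  by_cases h₂ : z = -π
  · simpa [h₂, ← ofReal_neg, E_ofReal_im] using congrArg im hz
  have hden : (z - π) * (z + π) ≠ 0 :=
    mul_ne_zero (sub_ne_zero.2 h₁) (by rwa [← sub_neg_eq_add, sub_ne_zero])
  rw [E_eq_div h₁ h₂, div_eq_zero_iff, or_iff_left hden] at hz
  rcases eq_pi_or_eq_neg_pi_of_sq_eq_exp (sq_eq_exp_of_numerator_eq_zero hz) hy with h | h
  exacts [h₁ h, h₂ h]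

end DeBrangesExample

theorem stmt_5 :
    ∃ E : ℂ → ℂ, Differentiable ℂ E ∧
      (∀ z : ℂ, z ≠ (π : ℂ) → z ≠ -(π : ℂ) →
        E z = ((32 * z ^ 2 - 25 * (π : ℂ) ^ 2) * Complex.I * Complex.exp (-Complex.I * z)
            - 7 * (π : ℂ) ^ 2 * Complex.I * Complex.exp (Complex.I * z)) /
          (32 * (z ^ 2 - (π : ℂ) ^ 2))) ∧
      (∀ z : ℂ, E z = 0 → z.im < 0) := by
  refine ⟨DeBrangesExample.E, DeBrangesExample.differentiable_E, fun z h₁ h₂ => ?_,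
    fun z => DeBrangesExample.im_neg_of_E_eq_zero⟩
  rw [DeBrangesExample.E_eq_div h₁ h₂, ← DeBrangesExample.thirty_two_mul_numerator,
    mul_div_mul_left _ _ (by norm_num : (32 : ℂ) ≠ 0)]
  ring
end

section
/- Let $E(z) = \frac{(32 z^2 - 25\pi^2) i e^{-iz} - 7\pi^2 i e^{iz}}{32 (z^2 - \pi^2)}$ (an entire function after removing the singularities at $\pm\pi$). Then there exists $M > 0$ such that every zero $z_0 = x + iy$ of $E$ satisfies $-\log(|x|+2) - M < y < 0$. -/
open Real Complex

open Filter Topology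

noncomputable def Nf : ℂ → ℂ := fun z =>
  (32 * z ^ 2 - 25 * (π : ℂ) ^ 2) * Complex.I * Complex.exp (-Complex.I * z)
    - 7 * (π : ℂ) ^ 2 * Complex.I * Complex.exp (Complex.I * z)

lemma hasDerivAt_Nf (w : ℂ) : HasDerivAt Nf
    ((64 * w * I) * Complex.exp (-I * w)
      + ((32 * w ^ 2 - 25 * (π : ℂ) ^ 2) * I) * (Complex.exp (-I * w) * (-I))
      - (7 * (π : ℂ) ^ 2 * I) * (Complex.exp (I * w) * I)) w := by
  have h1 : HasDerivAt (fun z : ℂ => (32 * z ^ 2 - 25 * (π : ℂ) ^ 2) * I) (64 * w * I) w := by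
    have := (((hasDerivAt_pow 2 w).const_mul (32 : ℂ)).sub_const (25 * (π : ℂ) ^ 2)).mul_const I
    refine this.congr_deriv ?_
    rw [show (2:ℕ) - 1 = 1 from rfl]
    push_cast
    ring
  have h2 : HasDerivAt (fun z : ℂ => Complex.exp (-I * z)) (Complex.exp (-I * w) * (-I)) w := by
    have := ((hasDerivAt_id w).const_mul (-I)).cexp
    refine this.congr_deriv ?_
    simp only [id_eq]
    ring
  have h3 : HasDerivAt (fun z : ℂ => Complex.exp (I * z)) (Complex.exp (I * w) * I) w := by
    have := ((hasDerivAt_id w).const_mul I).cexp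
    refine this.congr_deriv ?_
    simp only [id_eq]
    ring
  exact (h1.mul h2).sub (h3.const_mul _)

lemma exp_neg_I_pi : Complex.exp (-I * (π : ℂ)) = -1 := by
  rw [show -I * (π : ℂ) = -((π : ℂ) * I) from by ring, Complex.exp_neg, Complex.exp_pi_mul_I]
  norm_num

lemma exp_I_pi : Complex.exp (I * (π : ℂ)) = -1 := by
  rw [mul_comm]; exact Complex.exp_pi_mul_I

lemma exp_neg_I_negpi : Complex.exp (-I * (-(π : ℂ))) = -1 := by
  rw [show -I * (-(π : ℂ)) = (π : ℂ) * I from by ring, Complex.exp_pi_mul_I]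

lemma exp_I_negpi : Complex.exp (I * (-(π : ℂ))) = -1 := by
  rw [show I * (-(π : ℂ)) = -((π : ℂ) * I) from by ring, Complex.exp_neg, Complex.exp_pi_mul_I]
  norm_num

lemma Nf_pi : Nf (π : ℂ) = 0 := by
  simp only [Nf, exp_neg_I_pi, exp_I_pi]; ring

lemma Nf_negpi : Nf (-(π : ℂ)) = 0 := by
  simp only [Nf, exp_neg_I_negpi, exp_I_negpi]; ring

lemma hasDerivAt_Nf_pi : HasDerivAt Nf (-(64 * (π:ℂ) * I) - 14 * (π:ℂ) ^ 2) (π : ℂ) := by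
  have := hasDerivAt_Nf (π : ℂ)
  rw [exp_neg_I_pi, exp_I_pi] at this
  convert this using 1
  ring_nf
  simp [Complex.I_sq]
  ring

lemma hasDerivAt_Nf_negpi : HasDerivAt Nf (64 * (π:ℂ) * I - 14 * (π:ℂ) ^ 2) (-(π : ℂ)) := by
  have := hasDerivAt_Nf (-(π : ℂ))
  rw [exp_neg_I_negpi, exp_I_negpi] at this
  convert this using 1
  ring_nf
  simp [Complex.I_sq]
  ring

lemma piC_ne : (π : ℂ) ≠ 0 := by
  simpa using Real.pi_ne_zero

lemma pi_ne_neg : (π : ℂ) ≠ -(π : ℂ) := by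
  intro h
  apply piC_ne
  have : (2 : ℂ) * π = 0 := by linear_combination h
  simpa using this

lemma E_pi_ne (E : ℂ → ℂ) (hE : Differentiable ℂ E)
    (hval : ∀ z : ℂ, z ≠ (π : ℂ) → z ≠ -(π : ℂ) →
      E z = ((32 * z ^ 2 - 25 * (π : ℂ) ^ 2) * Complex.I * Complex.exp (-Complex.I * z)
          - 7 * (π : ℂ) ^ 2 * Complex.I * Complex.exp (Complex.I * z)) /
        (32 * (z ^ 2 - (π : ℂ) ^ 2))) : E (π : ℂ) ≠ 0 := by
  have hslope : Tendsto (fun z => Nf z / (z - (π:ℂ)))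
      (𝓝[≠] (π:ℂ)) (𝓝 (-(64 * (π:ℂ) * I) - 14 * (π:ℂ) ^ 2)) := by
    have h := hasDerivAt_iff_tendsto_slope.mp hasDerivAt_Nf_pi
    refine h.congr fun z => ?_
    rw [slope_def_field, Nf_pi, sub_zero]
  have h64 : (64 : ℂ) * (π:ℂ) ≠ 0 :=
    mul_ne_zero (by norm_num) piC_ne
  have hfac : Tendsto (fun z : ℂ => (32 * (z + (π:ℂ)))⁻¹)
      (𝓝[≠] (π:ℂ)) (𝓝 ((64 * (π:ℂ))⁻¹)) := by
    have hc : Tendsto (fun z : ℂ => 32 * (z + (π:ℂ))) (𝓝 (π:ℂ)) (𝓝 (32 * ((π:ℂ) + π))) :=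
      (continuous_const.mul (continuous_id.add continuous_const)).tendsto _
    rw [show (32:ℂ) * ((π:ℂ) + π) = 64 * π by ring] at hc
    exact (hc.inv₀ h64).mono_left nhdsWithin_le_nhds
  have hmul := hslope.mul hfac
  have heqF : ∀ᶠ z in 𝓝[≠] (π:ℂ), Nf z / (z - (π:ℂ)) * (32 * (z + (π:ℂ)))⁻¹ = E z := by
    filter_upwards [self_mem_nhdsWithin,
      nhdsWithin_le_nhds (compl_singleton_mem_nhds pi_ne_neg)] with z hz1 hz2
    have hz1' : z ≠ (π:ℂ) := hz1
    have hz2' : z ≠ -(π:ℂ) := hz2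
    rw [hval z hz1' hz2']
    rw [show ((32 * z ^ 2 - 25 * (π : ℂ) ^ 2) * Complex.I * Complex.exp (-Complex.I * z)
          - 7 * (π : ℂ) ^ 2 * Complex.I * Complex.exp (Complex.I * z)) = Nf z from rfl,
      show (32:ℂ) * (z ^ 2 - (π:ℂ) ^ 2) = (z - (π:ℂ)) * (32 * (z + (π:ℂ))) from by ring,
      ← div_div, div_eq_mul_inv]
    ring
  have hEt : Tendsto E (𝓝[≠] (π:ℂ)) (𝓝 (E (π:ℂ))) :=
    (hE.continuous.tendsto _).mono_left nhdsWithin_le_nhds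
  have hval' : E (π:ℂ) = (-(64 * (π:ℂ) * I) - 14 * (π:ℂ) ^ 2) * (64 * (π:ℂ))⁻¹ :=
    tendsto_nhds_unique hEt (hmul.congr' heqF)
  rw [hval']
  apply mul_ne_zero _ (inv_ne_zero h64)
  intro h
  have him := congrArg Complex.im h
  simp [← Complex.ofReal_pow] at him

lemma E_negpi_ne (E : ℂ → ℂ) (hE : Differentiable ℂ E)
    (hval : ∀ z : ℂ, z ≠ (π : ℂ) → z ≠ -(π : ℂ) →
      E z = ((32 * z ^ 2 - 25 * (π : ℂ) ^ 2) * Complex.I * Complex.exp (-Complex.I * z)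
          - 7 * (π : ℂ) ^ 2 * Complex.I * Complex.exp (Complex.I * z)) /
        (32 * (z ^ 2 - (π : ℂ) ^ 2))) : E (-(π : ℂ)) ≠ 0 := by
  have hslope : Tendsto (fun z => Nf z / (z + (π:ℂ)))
      (𝓝[≠] (-(π:ℂ))) (𝓝 (64 * (π:ℂ) * I - 14 * (π:ℂ) ^ 2)) := by
    have h := hasDerivAt_iff_tendsto_slope.mp hasDerivAt_Nf_negpi
    refine h.congr fun z => ?_
    rw [slope_def_field, Nf_negpi, sub_zero, sub_neg_eq_add]
  have h64 : (-64 : ℂ) * (π:ℂ) ≠ 0 :=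
    mul_ne_zero (by norm_num) piC_ne
  have hfac : Tendsto (fun z : ℂ => (32 * (z - (π:ℂ)))⁻¹)
      (𝓝[≠] (-(π:ℂ))) (𝓝 ((-64 * (π:ℂ))⁻¹)) := by
    have hc : Tendsto (fun z : ℂ => 32 * (z - (π:ℂ))) (𝓝 (-(π:ℂ))) (𝓝 (32 * (-(π:ℂ) - π))) :=
      (continuous_const.mul (continuous_id.sub continuous_const)).tendsto _
    rw [show (32:ℂ) * (-(π:ℂ) - π) = -64 * π by ring] at hc
    exact (hc.inv₀ h64).mono_left nhdsWithin_le_nhds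
  have hmul := hslope.mul hfac
  have heqF : ∀ᶠ z in 𝓝[≠] (-(π:ℂ)), Nf z / (z + (π:ℂ)) * (32 * (z - (π:ℂ)))⁻¹ = E z := by
    filter_upwards [self_mem_nhdsWithin,
      nhdsWithin_le_nhds (compl_singleton_mem_nhds pi_ne_neg.symm)] with z hz1 hz2
    have hz2' : z ≠ -(π:ℂ) := hz1
    have hz1' : z ≠ (π:ℂ) := hz2
    rw [hval z hz1' hz2']
    rw [show ((32 * z ^ 2 - 25 * (π : ℂ) ^ 2) * Complex.I * Complex.exp (-Complex.I * z)
          - 7 * (π : ℂ) ^ 2 * Complex.I * Complex.exp (Complex.I * z)) = Nf z from rfl,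
      show (32:ℂ) * (z ^ 2 - (π:ℂ) ^ 2) = (z + (π:ℂ)) * (32 * (z - (π:ℂ))) from by ring,
      ← div_div, div_eq_mul_inv]
    ring
  have hEt : Tendsto E (𝓝[≠] (-(π:ℂ))) (𝓝 (E (-(π:ℂ)))) :=
    (hE.continuous.tendsto _).mono_left nhdsWithin_le_nhds
  have hval' : E (-(π:ℂ)) = (64 * (π:ℂ) * I - 14 * (π:ℂ) ^ 2) * (-64 * (π:ℂ))⁻¹ :=
    tendsto_nhds_unique hEt (hmul.congr' heqF)
  rw [hval']
  apply mul_ne_zero _ (inv_ne_zero h64)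
  intro h
  have him := congrArg Complex.im h
  simp [← Complex.ofReal_pow] at him

lemma zero_eq (z : ℂ) (hz1 : z ≠ (π:ℂ)) (hz2 : z ≠ -(π:ℂ))
    (h0 : ((32 * z ^ 2 - 25 * (π : ℂ) ^ 2) * Complex.I * Complex.exp (-Complex.I * z)
          - 7 * (π : ℂ) ^ 2 * Complex.I * Complex.exp (Complex.I * z)) /
        (32 * (z ^ 2 - (π : ℂ) ^ 2)) = 0) :
    32 * z ^ 2 - 25 * (π:ℂ) ^ 2 = 7 * (π:ℂ) ^ 2 * Complex.exp (2 * I * z) := by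
  have d3 : (32:ℂ) * (z ^ 2 - (π:ℂ) ^ 2) ≠ 0 := by
    apply mul_ne_zero (by norm_num)
    rw [show z ^ 2 - (π:ℂ)^2 = (z - π) * (z + π) by ring]
    exact mul_ne_zero (sub_ne_zero.mpr hz1)
      (fun h => hz2 (eq_neg_of_add_eq_zero_left h))
  have hnum0 : (32 * z ^ 2 - 25 * (π : ℂ) ^ 2) * Complex.I * Complex.exp (-Complex.I * z)
      - 7 * (π : ℂ) ^ 2 * Complex.I * Complex.exp (Complex.I * z) = 0 :=
    (div_eq_zero_iff.mp h0).resolve_right d3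
  have hnum' : (32 * z ^ 2 - 25 * (π:ℂ) ^ 2) * Complex.exp (-I * z)
      = 7 * (π:ℂ) ^ 2 * Complex.exp (I * z) := by
    apply mul_right_cancel₀ Complex.I_ne_zero
    linear_combination hnum0
  have f1 : Complex.exp (-I * z) * Complex.exp (I * z) = 1 := by
    rw [← Complex.exp_add, show -I * z + I * z = 0 by ring, Complex.exp_zero]
  rw [show (2:ℂ) * I * z = I * z + I * z by ring, Complex.exp_add]
  linear_combination Complex.exp (I * z) * hnum' - (32 * z ^ 2 - 25 * (π:ℂ) ^ 2) * f1

lemma no_upper (x y : ℝ) (hy : 0 ≤ y)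
    (hre : -(7 * π ^ 2 * Real.exp (-(2 * y))) ≤ 32 * (x ^ 2 - y ^ 2) - 25 * π ^ 2)
    (hub : 32 * (x ^ 2 + y ^ 2) - 25 * π ^ 2 ≤ 7 * π ^ 2 * Real.exp (-(2 * y)))
    (him : 64 * x * y = 7 * π ^ 2 * (Real.exp (-(2 * y)) * Real.sin (2 * x))) :
    (x = π ∧ y = 0) ∨ (x = -π ∧ y = 0) := by
  have he1 : Real.exp (-(2 * y)) ≤ 1 := Real.exp_le_one_iff.mpr (by linarith)
  have hexp : (0:ℝ) < Real.exp (-(2 * y)) := Real.exp_pos _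
  have hpi := Real.pi_pos
  have h1 : y ^ 2 + (9/16) * π ^ 2 ≤ x ^ 2 := by nlinarith
  have h2 : x ^ 2 + y ^ 2 ≤ π ^ 2 := by nlinarith
  have h7 : (0:ℝ) < 7 * π ^ 2 := by positivity
  rcases le_or_gt x 0 with hx0 | hx0
  · have hxneg : x < 0 := by nlinarith
    have hx1 : -π ≤ x := by nlinarith
    have hx2 : x ≤ -(3/4) * π := by nlinarith
    have hs : Real.sin (2 * x) = Real.sin (2 * x + 2 * π) := (Real.sin_add_two_pi _).symm
    have hsnn : 0 ≤ Real.sin (2 * x + 2 * π) :=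
      Real.sin_nonneg_of_nonneg_of_le_pi (by linarith) (by linarith)
    have hxy0 : x * y = 0 := by
      have h1' : x * y ≤ 0 := mul_nonpos_iff.mpr (Or.inr ⟨hxneg.le, hy⟩)
      have h2' : 0 ≤ x * y := by nlinarith [him, hs, hsnn]
      linarith
    have hy0 : y = 0 := by
      rcases mul_eq_zero.mp hxy0 with h | h
      · exact absurd h hxneg.ne
      · exact h
    subst hy0
    have hE1 : Real.exp (-(2 * (0:ℝ))) = 1 := by norm_num
    have hsin0 : Real.sin (2 * x + 2 * π) = 0 := by
      have h2 : 7 * π ^ 2 * Real.sin (2 * x + 2 * π) = 0 := by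
        rw [hE1, hs] at him
        linarith [him]
      rcases mul_eq_zero.mp h2 with h | h
      · exact absurd h (ne_of_gt h7)
      · exact h
    have : 2 * x + 2 * π = 0 :=
      (Real.sin_eq_zero_iff_of_lt_of_lt (by linarith) (by linarith)).mp hsin0
    exact Or.inr ⟨by linarith, rfl⟩
  · have hx1 : x ≤ π := by nlinarith
    have hx2 : (3/4) * π ≤ x := by nlinarith
    have hs : Real.sin (2 * x) = -Real.sin (2 * π - 2 * x) := by
      rw [show 2 * π - 2 * x = -(2 * x - 2 * π) by ring, Real.sin_neg, Real.sin_sub_two_pi,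
        neg_neg]
    have hsnn : 0 ≤ Real.sin (2 * π - 2 * x) :=
      Real.sin_nonneg_of_nonneg_of_le_pi (by linarith) (by linarith)
    have hxy0 : x * y = 0 := by
      have h1' : 0 ≤ x * y := mul_nonneg hx0.le hy
      have h2' : x * y ≤ 0 := by nlinarith [him, hs, hsnn]
      linarith
    have hy0 : y = 0 := by
      rcases mul_eq_zero.mp hxy0 with h | h
      · exact absurd h hx0.ne'
      · exact h
    subst hy0
    have hE1 : Real.exp (-(2 * (0:ℝ))) = 1 := by norm_num
    have hsin0 : Real.sin (2 * π - 2 * x) = 0 := by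
      have h2 : 7 * π ^ 2 * Real.sin (2 * π - 2 * x) = 0 := by
        rw [hE1, hs] at him
        linarith [him]
      rcases mul_eq_zero.mp h2 with h | h
      · exact absurd h (ne_of_gt h7)
      · exact h
    have : 2 * π - 2 * x = 0 :=
      (Real.sin_eq_zero_iff_of_lt_of_lt (by linarith) (by linarith)).mp hsin0
    exact Or.inl ⟨by linarith, rfl⟩

lemma log_bound (x y : ℝ) (hy : y < 0)
    (hub : 7 * π ^ 2 * Real.exp (-(2 * y)) ≤ 32 * (x ^ 2 + y ^ 2) + 25 * π ^ 2) :
    -Real.log (|x| + 2) - 2 < y := by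
  set t : ℝ := -y with hty
  have ht : 0 < t := by linarith [hty]
  have hrw : -(2 * y) = t + t := by rw [hty]; ring
  rw [hrw, Real.exp_add] at hub
  have hexp_t : t ≤ Real.exp t := by linarith [Real.add_one_le_exp t]
  have ht2 : t ^ 2 ≤ Real.exp t * Real.exp t := by nlinarith [Real.exp_pos t]
  have hy2 : y ^ 2 = t ^ 2 := by rw [hty]; ring
  rw [hy2] at hub
  have hpi1 : (3.141592:ℝ) < π := Real.pi_gt_d6
  have hpi2 : π < 3.15 := Real.pi_lt_d2
  have he2 : (3:ℝ) ≤ Real.exp 1 * Real.exp 1 := by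
    nlinarith [Real.add_one_le_exp 1, Real.exp_pos 1]
  have hEE : (0:ℝ) < Real.exp t * Real.exp t := mul_pos (Real.exp_pos t) (Real.exp_pos t)
  have h37 : 37 * (Real.exp t * Real.exp t) ≤ 32 * x ^ 2 + 249 := by
    nlinarith [mul_nonneg (show (0:ℝ) ≤ 7 * π ^ 2 - 69 by nlinarith) hEE.le, ht2]
  have key : Real.exp t * Real.exp t ≤ (Real.exp 1 * (|x| + 2)) * (Real.exp 1 * (|x| + 2)) := by
    nlinarith [h37, _root_.sq_abs x, abs_nonneg x,
      mul_nonneg (show (0:ℝ) ≤ Real.exp 1 * Real.exp 1 - 3 by linarith) (sq_nonneg (|x| + 2))]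
  have hle : Real.exp t ≤ Real.exp 1 * (|x| + 2) := by
    nlinarith [Real.exp_pos t, mul_pos (Real.exp_pos 1) (show (0:ℝ) < |x| + 2 by positivity)]
  have hlog : t ≤ Real.log (Real.exp 1 * (|x| + 2)) :=
    (Real.le_log_iff_exp_le (by positivity)).mpr hle
  rw [Real.log_mul (Real.exp_ne_zero 1) (by positivity), Real.log_exp] at hlog
  linarith [hty, hlog]

theorem stmt_6 (E : ℂ → ℂ) (hE : Differentiable ℂ E)
    (hval : ∀ z : ℂ, z ≠ (π : ℂ) → z ≠ -(π : ℂ) →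
      E z = ((32 * z ^ 2 - 25 * (π : ℂ) ^ 2) * Complex.I * Complex.exp (-Complex.I * z)
          - 7 * (π : ℂ) ^ 2 * Complex.I * Complex.exp (Complex.I * z)) /
        (32 * (z ^ 2 - (π : ℂ) ^ 2))) :
    ∃ M : ℝ, 0 < M ∧ ∀ z : ℂ, E z = 0 →
      -Real.log (|z.re| + 2) - M < z.im ∧ z.im < 0 := by
  refine ⟨2, by norm_num, fun z hz => ?_⟩
  have hz1 : z ≠ (π:ℂ) := by rintro rfl; exact E_pi_ne E hE hval hz
  have hz2 : z ≠ -(π:ℂ) := by rintro rfl; exact E_negpi_ne E hE hval hz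
  have heq := zero_eq z hz1 hz2 (by rw [← hval z hz1 hz2]; exact hz)
  have him : 64 * z.re * z.im
      = 7 * π ^ 2 * (Real.exp (-(2 * z.im)) * Real.sin (2 * z.re)) := by
    have h := congrArg Complex.im heq
    simp [Complex.exp_im, Complex.mul_im, Complex.mul_re, pow_two, ← Complex.ofReal_pow] at h
    linear_combination h
  have habs : ‖32 * z ^ 2 - 25 * (π:ℂ) ^ 2‖
      = 7 * π ^ 2 * Real.exp (-(2 * z.im)) := by
    have h := congrArg (‖·‖) heq
    rw [norm_mul, Complex.norm_exp] at h
    rw [h, show (7 * (π:ℂ)^2) = ((7 * π^2 : ℝ) : ℂ) by push_cast; ring, Complex.norm_real, Real.norm_eq_abs,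
      abs_of_pos (by positivity)]
    congr 1
    simp [Complex.mul_re, Complex.mul_im]
  have habs32 : ‖32 * z ^ 2‖ = 32 * (z.re ^ 2 + z.im ^ 2) := by
    rw [norm_mul, norm_pow, Complex.sq_norm, Complex.normSq_apply,
      show ‖(32:ℂ)‖ = 32 by simp]
    ring
  have habs25 : ‖25 * (π:ℂ) ^ 2‖ = 25 * π ^ 2 := by
    rw [show (25 * (π:ℂ)^2) = ((25 * π^2 : ℝ) : ℂ) by push_cast; ring, Complex.norm_real, Real.norm_eq_abs,
      abs_of_pos (by positivity)]
  have hreZ : (32 * z ^ 2 - 25 * (π:ℂ) ^ 2).re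
      = 32 * (z.re ^ 2 - z.im ^ 2) - 25 * π ^ 2 := by
    simp [pow_two, Complex.mul_re, Complex.mul_im]
  have htri1 : ‖32 * z ^ 2 - 25 * (π:ℂ) ^ 2‖
      ≤ 32 * (z.re ^ 2 + z.im ^ 2) + 25 * π ^ 2 := by
    have hsub : ‖32 * z ^ 2 - 25 * (π:ℂ) ^ 2‖
        ≤ ‖32 * z ^ 2‖ + ‖25 * (π:ℂ) ^ 2‖ := by
      have h := norm_sub_le_norm_sub_add_norm_sub (32 * z ^ 2) 0 (25 * (π:ℂ) ^ 2)
      rwa [sub_zero, zero_sub, norm_neg] at h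
    rw [habs32, habs25] at hsub
    exact hsub
  have htri2 : 32 * (z.re ^ 2 + z.im ^ 2) - 25 * π ^ 2
      ≤ ‖32 * z ^ 2 - 25 * (π:ℂ) ^ 2‖ := by
    have h := norm_add_le (32 * z ^ 2 - 25 * (π:ℂ) ^ 2) (25 * (π:ℂ) ^ 2)
    rw [show 32 * z ^ 2 - 25 * (π:ℂ) ^ 2 + 25 * (π:ℂ) ^ 2 = 32 * z ^ 2 by ring,
      habs32, habs25] at h
    linarith
  have hrebd : -(7 * π ^ 2 * Real.exp (-(2 * z.im)))
      ≤ 32 * (z.re ^ 2 - z.im ^ 2) - 25 * π ^ 2 := by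
    have h := Complex.abs_re_le_norm (32 * z ^ 2 - 25 * (π:ℂ) ^ 2)
    rw [hreZ, habs] at h
    linarith [neg_abs_le (32 * (z.re ^ 2 - z.im ^ 2) - 25 * π ^ 2)]
  have hylt : z.im < 0 := by
    rcases lt_or_ge z.im 0 with h | h
    · exact h
    · exfalso
      rcases no_upper z.re z.im h hrebd (by linarith) him with ⟨hxπ, hy0⟩ | ⟨hxπ, hy0⟩
      · exact hz1 (Complex.ext (by simp [hxπ]) (by simp [hy0]))
      · exact hz2 (Complex.ext (by simp [hxπ]) (by simp [hy0]))
  exact ⟨log_bound z.re z.im hylt (by linarith), hylt⟩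
end

section
/- Let $f$ be an entire function of exponential type at most $2$ that is bounded on the real line, and suppose $f$ vanishes at every point of $\frac{\pi}{2}\mathbb{Z} = \{\pi m/2 : m \in \mathbb{Z}\}$. Then $f(z) = c \sin(2z)$ for some constant $c$. -/
/-! By Phragmén–Lindelöf in the upper and lower half-planes, exponential type `2` and
boundedness on `ℝ` give `‖f z‖ ≤ B exp (2 |im z|)`. As `f` vanishes at the zeros `π ℤ / 2` of
`sin (2 z)`, all of which are simple, `g = f / sin (2 z)` is entire. On the boundary of a large
rectangle whose vertical sides lie where `cos (2 re z) = 0` and whose horizontal sides stay away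
from `ℝ`, `‖sin (2 z)‖` is comparable to `exp (2 |im z|)`, so the maximum modulus principle bounds
`g` uniformly and Liouville's theorem makes it constant. -/

open Real Complex Filter Set Bornology Topology

theorem Real.exp_le_three_mul_sinh {t : ℝ} (ht : 2 ≤ t) : exp t ≤ 3 * sinh t := by
  have h : 3 ≤ exp t * exp t := by
    rw [← Real.exp_add]; linarith [Real.add_one_le_exp (t + t)]
  have hinv : exp (-t) * exp t = 1 := by rw [← Real.exp_add]; simp
  rw [Real.sinh_eq]
  nlinarith [Real.exp_pos t, Real.exp_pos (-t)]

theorem Real.exp_abs_le_two_mul_cosh (t : ℝ) : exp |t| ≤ 2 * cosh t := by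
  rw [← Real.cosh_abs, Real.cosh_eq]
  linarith [Real.exp_pos (-|t|)]

namespace Complex

theorem normSq_sin (z : ℂ) : normSq (sin z) = Real.sin z.re ^ 2 + Real.sinh z.im ^ 2 := by
  conv_lhs => rw [← re_add_im z]
  rw [sin_add_mul_I, ← ofReal_sin, ← ofReal_cos, ← ofReal_cosh, ← ofReal_sinh,
    ← ofReal_mul, ← ofReal_mul, normSq_add_mul_I]
  nlinarith [Real.sin_sq_add_cos_sq z.re, Real.cosh_sq z.im]

theorem abs_sinh_im_le_norm_sin (z : ℂ) : |Real.sinh z.im| ≤ ‖sin z‖ := by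
  rw [norm_def, normSq_sin, ← Real.sqrt_sq_eq_abs]
  exact Real.sqrt_le_sqrt (by nlinarith [sq_nonneg (Real.sin z.re)])

theorem norm_sin_of_cos_re_eq_zero {z : ℂ} (h : Real.cos z.re = 0) :
    ‖sin z‖ = Real.cosh z.im := by
  have hsin : Real.sin z.re ^ 2 = 1 := by nlinarith [Real.sin_sq_add_cos_sq z.re]
  rw [norm_def, normSq_sin, hsin, add_comm, ← Real.cosh_sq, Real.sqrt_sq (Real.cosh_pos _).le]

theorem exp_abs_im_le_three_mul_norm_sin {z : ℂ} (h : 2 ≤ |z.im| ∨ Real.cos z.re = 0) :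
    Real.exp |z.im| ≤ 3 * ‖sin z‖ := by
  rcases h with h | h
  · calc Real.exp |z.im| ≤ 3 * Real.sinh |z.im| := Real.exp_le_three_mul_sinh h
      _ ≤ 3 * ‖sin z‖ := by rw [← Real.abs_sinh]; gcongr; exact abs_sinh_im_le_norm_sin z
  · rw [norm_sin_of_cos_re_eq_zero h]
    linarith [Real.exp_abs_le_two_mul_cosh z.im, Real.cosh_pos z.im]

end Complex

def HasExpTypeLE (f : ℂ → ℂ) (τ : ℝ) : Prop :=
  ∀ ε : ℝ, 0 < ε → ∃ C : ℝ, ∀ z : ℂ, ‖f z‖ ≤ C * Real.exp ((τ + ε) * ‖z‖)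

namespace HasExpTypeLE

variable {f : ℂ → ℂ} {τ B : ℝ}

theorem norm_le_mul_exp_add_mul_im (htype : HasExpTypeLE f τ) (hf : Differentiable ℂ f)
    (hB : ∀ x : ℝ, ‖f x‖ ≤ B) {δ : ℝ} (hδ : 0 < δ) {z : ℂ} (hz : 0 ≤ z.im) :
    ‖f z‖ ≤ B * Real.exp ((τ + δ) * z.im) := by
  -- Rotate the upper half-plane onto the right one and damp the growth along the positive
  -- imaginary axis by `exp (-(τ + δ) w)`, leaving a function bounded on both boundary rays.
  set F : ℂ → ℂ := fun w => Complex.exp (-((τ + δ : ℝ) : ℂ) * w) * f (I * w)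
  have hF : ∀ w, ‖F w‖ = Real.exp (-((τ + δ) * w.re)) * ‖f (I * w)‖ := fun w => by
    simp only [F, norm_mul, Complex.norm_exp, neg_mul, neg_re, re_ofReal_mul]
  have hF_growth : ∃ c < (2 : ℝ), ∃ A,
      F =O[cobounded ℂ ⊓ 𝓟 {w | 0 < w.re}] fun w => Real.exp (A * ‖w‖ ^ c) := by
    obtain ⟨C, hC⟩ := htype 1 one_pos
    refine ⟨1, one_lt_two, |τ + δ| + (τ + 1), .of_bound C (.of_forall fun w => ?_)⟩
    have hre : -((τ + δ) * w.re) ≤ |τ + δ| * ‖w‖ := by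
      calc -((τ + δ) * w.re) ≤ |(τ + δ) * w.re| := neg_le_abs _
        _ ≤ |τ + δ| * ‖w‖ := by rw [abs_mul]; gcongr; exact abs_re_le_norm w
    calc ‖F w‖ ≤ Real.exp (|τ + δ| * ‖w‖) * (C * Real.exp ((τ + 1) * ‖w‖)) := by
          rw [hF]
          gcongr
          simpa using hC (I * w)
      _ = C * ‖Real.exp ((|τ + δ| + (τ + 1)) * ‖w‖ ^ (1 : ℝ))‖ := by
          rw [Real.rpow_one, Real.norm_of_nonneg (Real.exp_pos _).le, mul_left_comm,
            ← Real.exp_add, ← add_mul]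
  have hF_real : IsBoundedUnder (· ≤ ·) atTop fun x : ℝ => ‖F x‖ := by
    obtain ⟨C, hC⟩ := htype (δ / 2) (half_pos hδ)
    have hC₀ : 0 ≤ C := by simpa using (norm_nonneg _).trans (hC 0)
    refine isBoundedUnder_of_eventually_le (a := C) ?_
    filter_upwards [eventually_ge_atTop 0] with x hx
    calc ‖F x‖ ≤ Real.exp (-((τ + δ) * x)) * (C * Real.exp ((τ + δ / 2) * x)) := by
          rw [hF, ofReal_re]
          gcongr
          simpa [abs_of_nonneg hx] using hC (I * x)
      _ = C * Real.exp (-(δ / 2 * x)) := by rw [mul_left_comm, ← Real.exp_add]; ring_nf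
      _ ≤ C := mul_le_of_le_one_right hC₀ (Real.exp_le_one_iff.2 (by nlinarith))
  have hF_imag : ∀ x : ℝ, ‖F (x * I)‖ ≤ B := fun x => by
    simpa [hF, mul_left_comm I] using hB (-x)
  have hw : 0 ≤ (-I * z).re := by simpa using hz
  have := PhragmenLindelof.right_half_plane_of_bounded_on_real
    (by fun_prop : Differentiable ℂ F).diffContOnCl hF_growth
    hF_real hF_imag hw
  have hIz : I * (-I * z) = z := by rw [← mul_assoc]; simp
  rw [hF, hIz, show (-I * z).re = z.im by simp, Real.exp_neg,
    inv_mul_le_iff₀ (Real.exp_pos _)] at this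
  rwa [mul_comm]

theorem norm_le_mul_exp_mul_im (htype : HasExpTypeLE f τ) (hf : Differentiable ℂ f)
    (hB : ∀ x : ℝ, ‖f x‖ ≤ B) {z : ℂ} (hz : 0 ≤ z.im) :
    ‖f z‖ ≤ B * Real.exp (τ * z.im) := by
  have hlim : Tendsto (fun δ : ℝ => B * Real.exp ((τ + δ) * z.im)) (𝓝[>] 0)
      (𝓝 (B * Real.exp (τ * z.im))) :=
    (Continuous.tendsto' (by fun_prop) _ _ (by simp)).mono_left nhdsWithin_le_nhds
  exact ge_of_tendsto hlim (eventually_nhdsWithin_of_forall fun δ hδ =>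
    htype.norm_le_mul_exp_add_mul_im hf hB hδ hz)

theorem norm_le_mul_exp_mul_abs_im (htype : HasExpTypeLE f τ) (hf : Differentiable ℂ f)
    (hB : ∀ x : ℝ, ‖f x‖ ≤ B) (z : ℂ) :
    ‖f z‖ ≤ B * Real.exp (τ * |z.im|) := by
  rcases le_total 0 z.im with hz | hz
  · rw [abs_of_nonneg hz]
    exact htype.norm_le_mul_exp_mul_im hf hB hz
  · have htype_neg : HasExpTypeLE (fun w => f (-w)) τ := fun ε hε =>
      (htype ε hε).imp fun C hC w => by simpa using hC (-w)
    have := htype_neg.norm_le_mul_exp_mul_im (hf.comp differentiable_neg)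
      (fun x => by simpa using hB (-x)) (z := -z) (by simpa using hz)
    simpa [abs_of_nonpos hz] using this

end HasExpTypeLE

theorem exists_differentiable_eq_mul_of_simple_zeros {f s : ℂ → ℂ}
    (hf : Differentiable ℂ f) (hs : Differentiable ℂ s) (hs' : ∀ z, s z = 0 → deriv s z ≠ 0)
    (hfs : ∀ z, s z = 0 → f z = 0) :
    ∃ g : ℂ → ℂ, Differentiable ℂ g ∧ ∀ z, f z = s z * g z := by
  classical
  refine ⟨fun z => if s z = 0 then deriv f z / deriv s z else f z / s z, fun z₀ => ?_, fun z => ?_⟩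
  · by_cases h₀ : s z₀ = 0
    · -- Near a zero `z₀` of `s`, the quotient is the ratio of the difference quotients at `z₀`.
      have hsne : ∀ᶠ z in 𝓝[≠] z₀, s z ≠ 0 := (hs z₀).hasDerivAt.eventually_ne (hs' z₀ h₀)
      have hdslope : ∀ {u : ℂ → ℂ}, Differentiable ℂ u → Differentiable ℂ (dslope u z₀) :=
        fun hu => differentiableOn_univ.1
          ((Complex.differentiableOn_dslope univ_mem).2 hu.differentiableOn)
      have hden : dslope s z₀ z₀ ≠ 0 := by rw [dslope_same]; exact hs' z₀ h₀
      refine ((hdslope hf z₀).div (hdslope hs z₀) hden).congr_of_eventuallyEq ?_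
      filter_upwards [eventually_nhdsWithin_iff.1 hsne] with z hz
      rcases eq_or_ne z z₀ with rfl | hzz₀
      · simp [h₀]
      · simp only [hz hzz₀, if_false, Pi.div_apply, dslope_of_ne _ hzz₀, slope_def_field, h₀,
          hfs z₀ h₀, sub_zero]
        exact (div_div_div_cancel_right₀ (sub_ne_zero.2 hzz₀) _ _).symm
    · refine ((hf z₀).div (hs z₀) h₀).congr_of_eventuallyEq ?_
      filter_upwards [(hs z₀).continuousAt.eventually_ne h₀] with z hz
      simp [hz]
  · by_cases hz : s z = 0
    · simp [hz, hfs z hz]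
    · simp [hz, mul_div_cancel₀ _ hz]

theorem norm_le_of_norm_sin_mul_le {g : ℂ → ℂ} {B : ℝ} (hg : Differentiable ℂ g)
    (h : ∀ z, ‖Complex.sin z * g z‖ ≤ B * Real.exp |z.im|) (z : ℂ) : ‖g z‖ ≤ 3 * B := by
  have hfront : ∀ w : ℂ, 2 ≤ |w.im| ∨ Real.cos w.re = 0 → ‖g w‖ ≤ 3 * B := by
    intro w hw
    have hsin := exp_abs_im_le_three_mul_norm_sin hw
    refine le_of_mul_le_mul_left ?_ (Real.exp_pos |w.im|)
    calc Real.exp |w.im| * ‖g w‖ ≤ 3 * (‖Complex.sin w‖ * ‖g w‖) := by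
          rw [← mul_assoc]; gcongr
      _ ≤ 3 * (B * Real.exp |w.im|) := by rw [← norm_mul]; gcongr; exact h w
      _ = Real.exp |w.im| * (3 * B) := by ring
  -- Maximum modulus on a rectangle whose vertical sides lie on lines `re = ±(π / 2 + N π)`,
  -- where `cos` vanishes, and whose horizontal sides lie at height `≥ 2`.
  obtain ⟨N, hN⟩ := exists_nat_ge (max (|z.re| / π) |z.im|)
  set a : ℝ := π / 2 + N * π with ha_def
  set b : ℝ := N + 2 with hb_def
  have ha : 0 < a := by positivity
  have hb : 0 < b := by positivity
  have hcos : Real.cos a = 0 := by simp [a, Real.cos_add_nat_mul_pi]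
  refine Complex.norm_le_of_forall_mem_frontier_norm_le
    ((Metric.isBounded_Ioo (-a) a).reProdIm (Metric.isBounded_Ioo (-b) b)) hg.diffContOnCl
    (fun w hw => hfront w ?_) ?_
  · rw [frontier_reProdIm, frontier_Ioo (by linarith), frontier_Ioo (by linarith)] at hw
    simp only [mem_union, mem_reProdIm, mem_insert_iff, mem_singleton_iff] at hw
    rcases hw with ⟨-, hw | hw⟩ | ⟨hw | hw, -⟩
    · left; rw [hw, abs_neg, abs_of_pos hb]; linarith
    · left; rw [hw, abs_of_pos hb]; linarith
    · right; rw [hw, Real.cos_neg, hcos]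
    · right; rw [hw, hcos]
  · have hre : |z.re| ≤ N * π := by
      rw [← div_le_iff₀ Real.pi_pos]; exact (le_max_left _ _).trans hN
    have him : |z.im| ≤ N := (le_max_right _ _).trans hN
    rw [closure_reProdIm, closure_Ioo (by linarith), closure_Ioo (by linarith)]
    refine ⟨abs_le.1 (hre.trans ?_), abs_le.1 (him.trans ?_)⟩ <;> linarith [Real.pi_pos]

theorem stmt_8 (f : ℂ → ℂ) (hdiff : Differentiable ℂ f)
    (htype : ∀ ε : ℝ, 0 < ε → ∃ C : ℝ, ∀ z : ℂ, ‖f z‖ ≤ C * Real.exp ((2 + ε) * ‖z‖))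
    (hbdd : ∃ B : ℝ, ∀ x : ℝ, ‖f x‖ ≤ B)
    (hzero : ∀ m : ℤ, f ((π : ℂ) * m / 2) = 0) :
    ∃ c : ℂ, ∀ z : ℂ, f z = c * Complex.sin (2 * z) := by
  obtain ⟨B, hB⟩ := hbdd
  have hf_le : ∀ z, ‖f z‖ ≤ B * Real.exp (2 * |z.im|) :=
    HasExpTypeLE.norm_le_mul_exp_mul_abs_im htype hdiff hB
  have hs : ∀ z, HasDerivAt (fun z => Complex.sin (2 * z)) (2 * Complex.cos (2 * z)) z :=
    fun z => by simpa [mul_comm] using ((hasDerivAt_id z).const_mul (2 : ℂ)).csin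
  obtain ⟨g, hg, hfg⟩ := exists_differentiable_eq_mul_of_simple_zeros hdiff
    (fun z => (hs z).differentiableAt)
    (fun z hz hz' => by
      rw [(hs z).deriv, mul_eq_zero, or_iff_right two_ne_zero] at hz'
      simpa [hz, hz'] using Complex.sin_sq_add_cos_sq (2 * z))
    (fun z hz => by
      obtain ⟨k, hk⟩ := Complex.sin_eq_zero_iff.1 hz
      simpa [show z = π * k / 2 by linear_combination hk / 2] using hzero k)
  have hg_le : ∀ z, ‖g z‖ ≤ 3 * B := fun z => by
    simpa using norm_le_of_norm_sin_mul_le (g := fun w => g (w / 2)) (hg.comp (by fun_prop))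
      (fun w => by simpa [hfg, abs_div, mul_div_cancel₀] using hf_le (w / 2)) (2 * z)
  obtain ⟨c, hc⟩ := hg.exists_const_forall_eq_of_bounded
    (isBounded_iff_forall_norm_le.2 ⟨3 * B, by rintro - ⟨z, rfl⟩; exact hg_le z⟩)
  exact ⟨c, fun z => by rw [hfg, hc, mul_comm]⟩
end

section
/- Let $E = A + iB$ be a Hermite--Biehler function (entire, $|E(z)| > |E(\bar z)|$ for $\operatorname{Im} z > 0$, no real zeros), with $A, B$ entire and real on $\mathbb{R}$. Then $A$ and $B$ have only real zeros, and the zeros of $A$ and $B$ strictly interlace on $\mathbb{R}$. -/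
/-!
Since `A` and `B` are real on `ℝ`, they commute with conjugation, so
`E (conj z) = conj (A z) + I conj (B z)` and `‖E z‖² - ‖E (conj z)‖² = 4 Im (A z conj (B z))`.
The Hermite–Biehler condition thus says `Im (A conj B) > 0` in the upper half-plane, which rules
out non-real zeros of `A` and `B`. This imaginary part vanishes on `ℝ`, so its derivative in the
vertical direction at a real point, the Wronskian `A' B - A B'`, is nonnegative. Hence `A / B` is
nondecreasing between consecutive zeros of `B`, and if `B` had no zero between two zeros of `A`,
then `A` would vanish on an interval, hence identically. The pair `(B, -A)` satisfies the same
positivity condition, which gives the other interlacing.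
-/

open Complex ComplexConjugate Filter Set Topology

theorem norm_conj_add_I_mul_conj_lt_iff (a b : ℂ) :
    ‖conj a + I * conj b‖ < ‖a + I * b‖ ↔ 0 < (a * conj b).im := by
  have hdiff : normSq (a + I * b) - normSq (conj a + I * conj b) = 4 * (a * conj b).im := by
    simp only [normSq_apply, add_re, add_im, mul_re, mul_im, I_re, I_im, conj_re, conj_im]
    ring
  rw [← sq_lt_sq₀ (norm_nonneg _) (norm_nonneg _), ← normSq_eq_norm_sq, ← normSq_eq_norm_sq,
    ← sub_pos, hdiff]
  exact mul_pos_iff_of_pos_left four_pos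

theorem Differentiable.eq_of_eqOn_ofReal_Ioo {f g : ℂ → ℂ} (hf : Differentiable ℂ f)
    (hg : Differentiable ℂ g) {x y : ℝ} (hxy : x < y) (hfg : ∀ t ∈ Ioo x y, f t = g t) :
    f = g := by
  have hmaps : Tendsto ((↑) : ℝ → ℂ) (𝓝[>] x) (𝓝[≠] (x : ℂ)) :=
    continuous_ofReal.continuousWithinAt.tendsto_nhdsWithin fun t ht => by
      simpa using (ne_of_gt ht)
  exact (analyticOnNhd_univ_iff_differentiable.mpr hf).eq_of_frequently_eq
    (analyticOnNhd_univ_iff_differentiable.mpr hg)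
    (hmaps.frequently (eventually_of_mem (Ioo_mem_nhdsGT hxy) hfg).frequently)

theorem Differentiable.apply_conj_eq_conj_apply {f : ℂ → ℂ} (hf : Differentiable ℂ f)
    (hreal : ∀ x : ℝ, (f x).im = 0) (z : ℂ) : f (conj z) = conj (f z) := by
  have hreflect : Differentiable ℂ (conj ∘ f ∘ conj) := fun _ =>
    differentiableAt_conj_conj_iff.mpr (hf _)
  have := hreflect.eq_of_eqOn_ofReal_Ioo hf zero_lt_one fun t _ => by
    simpa [conj_eq_iff_im] using hreal t
  simpa using (congrFun this (conj z)).symm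

theorem HasDerivAt.nonneg_of_forall_pos_le {h : ℝ → ℝ} {h' x : ℝ} (hd : HasDerivAt h h' x)
    (hle : ∀ t, 0 < t → h x ≤ h (x + t)) : 0 ≤ h' :=
  ge_of_tendsto hd.tendsto_slope_zero_right <| eventually_mem_nhdsWithin.mono fun t ht =>
    smul_nonneg (inv_nonneg.mpr (le_of_lt ht)) (sub_nonneg.mpr (hle t ht))

theorem eqOn_zero_of_wronskian_nonneg {a b a' b' : ℝ → ℝ} {x y : ℝ}
    (ha : ∀ t ∈ Icc x y, HasDerivAt a (a' t) t) (hb : ∀ t ∈ Icc x y, HasDerivAt b (b' t) t)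
    (hb0 : ∀ t ∈ Icc x y, b t ≠ 0) (hW : ∀ t ∈ Icc x y, a t * b' t ≤ a' t * b t)
    (hax : a x = 0) (hay : a y = 0) : EqOn a 0 (Icc x y) := by
  have hq : ∀ t ∈ Icc x y, HasDerivAt (a / b) ((a' t * b t - a t * b' t) / b t ^ 2) t :=
    fun t ht => (ha t ht).div (hb t ht) (hb0 t ht)
  have hmono : MonotoneOn (a / b) (Icc x y) := by
    refine monotoneOn_of_hasDerivWithinAt_nonneg
      (f' := fun t => (a' t * b t - a t * b' t) / b t ^ 2) (convex_Icc x y)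
      (fun t ht => (hq t ht).continuousAt.continuousWithinAt)
      (fun t ht => ?_) fun t ht => ?_
    · rw [interior_Icc] at ht ⊢
      exact (hq t (Ioo_subset_Icc_self ht)).hasDerivWithinAt
    · rw [interior_Icc] at ht
      have := hW t (Ioo_subset_Icc_self ht)
      exact div_nonneg (by linarith) (sq_nonneg _)
  intro t ht
  have hxy : x ≤ y := ht.1.trans ht.2
  have hlow := hmono (left_mem_Icc.mpr hxy) ht ht.1
  have hupp := hmono ht (right_mem_Icc.mpr hxy) ht.2
  simp only [Pi.div_apply, hax, hay, zero_div] at hlow hupp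
  simpa [hb0 t ht] using le_antisymm hupp hlow

theorem re_deriv_mul_conj_sub_nonneg {A B : ℂ → ℂ} (hA : Differentiable ℂ A)
    (hB : Differentiable ℂ B) (hpos : ∀ z : ℂ, 0 < z.im → 0 < (A z * conj (B z)).im)
    {x : ℝ} (hx : (A x * conj (B x)).im = 0) :
    0 ≤ (deriv A x * conj (B x) - A x * conj (deriv B x)).re := by
  have hline : ∀ F : ℂ → ℂ, Differentiable ℂ F →
      HasDerivAt (fun t : ℝ => F (x + t * I)) (I * deriv F x) 0 := fun F hF => by
    have hG : HasDerivAt (fun w : ℂ => F (x + w * I)) (deriv F (x + (0 : ℝ) * I) * (1 * I))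
        ((0 : ℝ) : ℂ) :=
      (hF _).hasDerivAt.comp _ (((hasDerivAt_id _).mul_const I).const_add (x : ℂ))
    simpa [mul_comm I] using hG.comp_ofReal
  have hprod := imCLM.hasFDerivAt.comp_hasDerivAt (0 : ℝ) ((hline A hA).mul (hline B hB).star)
  have hderiv := hprod.nonneg_of_forall_pos_le fun t ht => ?_
  · convert hderiv using 1
    simp only [ofReal_zero, zero_mul, add_zero, imCLM_apply, RCLike.star_def, map_mul, conj_I]
    rw [← I_mul_im]
    congr 1
    ring
  · simp only [Function.comp_apply, imCLM_apply, Pi.mul_apply, ofReal_zero, zero_mul, add_zero,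
      zero_add, star_def]
    rw [hx]
    exact (hpos _ (by simpa using ht)).le

namespace HermiteBiehler

variable {A B : ℂ → ℂ}

theorem apply_ne_zero_of_im_pos (hpos : ∀ z : ℂ, 0 < z.im → 0 < (A z * conj (B z)).im)
    {z : ℂ} (hz : 0 < z.im) : A z ≠ 0 := fun h => by
  simpa [h] using hpos z hz

theorem im_eq_zero_of_apply_eq_zero (hA : Differentiable ℂ A) (hAreal : ∀ x : ℝ, (A x).im = 0)
    (hpos : ∀ z : ℂ, 0 < z.im → 0 < (A z * conj (B z)).im) {z : ℂ} (hz : A z = 0) :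
    z.im = 0 := by
  rcases lt_trichotomy z.im 0 with hneg | hzero | hpos'
  · refine absurd ?_ (apply_ne_zero_of_im_pos hpos (z := conj z) (by simpa using hneg))
    rw [hA.apply_conj_eq_conj_apply hAreal, hz, map_zero]
  · exact hzero
  · exact absurd hz (apply_ne_zero_of_im_pos hpos hpos')

theorem im_mul_conj_neg_swap (a b : ℂ) : (b * conj (-a)).im = (a * conj b).im := by
  simp only [mul_im, conj_re, conj_im, neg_re, neg_im]
  ring

theorem re_mul_re_deriv_le (hA : Differentiable ℂ A) (hB : Differentiable ℂ B)
    (hAreal : ∀ x : ℝ, (A x).im = 0) (hBreal : ∀ x : ℝ, (B x).im = 0)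
    (hpos : ∀ z : ℂ, 0 < z.im → 0 < (A z * conj (B z)).im) (x : ℝ) :
    (A x).re * (deriv B x).re ≤ (deriv A x).re * (B x).re := by
  have h := re_deriv_mul_conj_sub_nonneg hA hB hpos (x := x)
    (by simp [mul_im, hAreal x, hBreal x])
  simp only [sub_re, mul_re, conj_re, conj_im, hAreal x, hBreal x] at h
  linarith

theorem exists_zero_between (hA : Differentiable ℂ A) (hB : Differentiable ℂ B)
    (hAreal : ∀ x : ℝ, (A x).im = 0) (hBreal : ∀ x : ℝ, (B x).im = 0)
    (hpos : ∀ z : ℂ, 0 < z.im → 0 < (A z * conj (B z)).im)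
    (hcommon : ∀ x : ℝ, ¬(A x = 0 ∧ B x = 0)) {x y : ℝ} (hxy : x < y)
    (hAx : A x = 0) (hAy : A y = 0) : ∃ t : ℝ, x < t ∧ t < y ∧ B t = 0 := by
  by_contra! hB0
  have hBre : ∀ t ∈ Icc x y, (B t).re ≠ 0 := by
    intro t ht hre
    have hBt : B t = 0 := Complex.ext hre (hBreal t)
    rcases ht.1.eq_or_lt with hxt | hxt
    · exact hcommon x ⟨hAx, hxt ▸ hBt⟩
    rcases ht.2.eq_or_lt with hty | hty
    · exact hcommon y ⟨hAy, hty ▸ hBt⟩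
    exact hB0 t hxt hty hBt
  have hAre : EqOn (fun t : ℝ => (A t).re) 0 (Icc x y) :=
    eqOn_zero_of_wronskian_nonneg (fun t _ => (hA t).hasDerivAt.real_of_complex)
      (fun t _ => (hB t).hasDerivAt.real_of_complex) hBre
      (fun t _ => re_mul_re_deriv_le hA hB hAreal hBreal hpos t) (by simp [hAx]) (by simp [hAy])
  have hA0 : A = 0 := hA.eq_of_eqOn_ofReal_Ioo (differentiable_const 0) hxy fun t ht =>
    Complex.ext (hAre (Ioo_subset_Icc_self ht)) (hAreal t)
  exact apply_ne_zero_of_im_pos hpos (z := I) (by simp) (by simp [hA0])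

end HermiteBiehler

theorem stmt_9 (E A B : ℂ → ℂ)
    (hA : Differentiable ℂ A) (hB : Differentiable ℂ B)
    (hAreal : ∀ x : ℝ, (A x).im = 0) (hBreal : ∀ x : ℝ, (B x).im = 0)
    (hE : ∀ z : ℂ, E z = A z + Complex.I * B z)
    (hHB : ∀ z : ℂ, 0 < z.im → ‖E (starRingEnd ℂ z)‖ < ‖E z‖)
    (hnoreal : ∀ x : ℝ, E x ≠ 0) :
    (∀ z : ℂ, A z = 0 → z.im = 0) ∧ (∀ z : ℂ, B z = 0 → z.im = 0) ∧
      (∀ x : ℝ, ¬(A x = 0 ∧ B x = 0)) ∧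
      (∀ x y : ℝ, x < y → A x = 0 → A y = 0 →
        ∃ t : ℝ, x < t ∧ t < y ∧ B t = 0) ∧
      (∀ x y : ℝ, x < y → B x = 0 → B y = 0 →
        ∃ t : ℝ, x < t ∧ t < y ∧ A t = 0) := by
  have hpos : ∀ z : ℂ, 0 < z.im → 0 < (A z * conj (B z)).im := fun z hz => by
    have h := hHB z hz
    rwa [hE, hE, hA.apply_conj_eq_conj_apply hAreal, hB.apply_conj_eq_conj_apply hBreal,
      norm_conj_add_I_mul_conj_lt_iff] at h
  have hpos' : ∀ z : ℂ, 0 < z.im → 0 < (B z * conj (-A z)).im := fun z hz => by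
    simpa only [HermiteBiehler.im_mul_conj_neg_swap] using hpos z hz
  have hAreal' : ∀ x : ℝ, (-A x).im = 0 := fun x => by simp [hAreal x]
  have hcommon : ∀ x : ℝ, ¬(A x = 0 ∧ B x = 0) := fun x ⟨hAx, hBx⟩ =>
    hnoreal x (by simp [hE, hAx, hBx])
  refine ⟨fun z => HermiteBiehler.im_eq_zero_of_apply_eq_zero hA hAreal hpos,
    fun z => HermiteBiehler.im_eq_zero_of_apply_eq_zero hB hBreal hpos', hcommon,
    fun x y => HermiteBiehler.exists_zero_between hA hB hAreal hBreal hpos hcommon,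
    fun x y hxy hBx hBy => ?_⟩
  obtain ⟨t, hxt, hty, ht⟩ := HermiteBiehler.exists_zero_between hB hA.neg hBreal hAreal' hpos'
    (fun x ⟨hBx, hAx⟩ => hcommon x ⟨neg_eq_zero.mp hAx, hBx⟩) hxy hBx hBy
  exact ⟨t, hxt, hty, neg_eq_zero.mp ht⟩
end

section
/- Let $g(z) = \sum_{k\ne 0} \frac{c_k}{z - \pi k}$ where $c_k = C/k + a_k/k$ with $C \in \mathbb{R}$, $\{a_k\} \in \ell^2$, and the series converges locally uniformly off $\pi\mathbb{Z}$. Then for every $\delta > 0$ there exists $R_\delta$ such that $|g(x)| < 1/2$ whenever $x \in \mathbb{R}$, $|x| \ge R_\delta$ and $\operatorname{dist}(x, \pi\mathbb{Z}) \ge \delta$. Consequently, the function $1 + g$ has no real zeros $x$ with $|x| \ge R_\delta$ and $\operatorname{dist}(x, \pi\mathbb{Z}) \ge \delta$. -/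
/-!
Write `c_k = (C + a_k) / k`: the sequence `(c_k)` is square summable. If `x` keeps distance
`≥ δ` from `πℤ`, the lattice sum `∑_k (x - πk)⁻²` is bounded by a constant `B` independent of `x`.
Split the series at a finite set `s` of indices. On the complement, the weighted AM-GM inequality
`|c_k| / |x - πk| ≤ (t c_k² + (x - πk)⁻² / t) / 2` bounds the tail by
`(t ∑_{k ∉ s} c_k² + B / t) / 2`, which is small once `t` is large and then `s` is large;
each of the finitely many remaining terms tends to `0` as `|x| → ∞`.
-/

open Real Filter Topology

lemma inv_sub_mul_int_sq_le {ω δ y : ℝ} (hω : 0 < ω) (hδ : 0 < δ) (hδy : δ ≤ |y|)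
    (hy : |y| ≤ ω / 2) (j : ℤ) :
    (y - ω * j)⁻¹ ^ 2 ≤ (if j = 0 then (δ ^ 2)⁻¹ else 0) + 4 / ω ^ 2 * ((j : ℝ) ^ 2)⁻¹ := by
  rcases eq_or_ne j 0 with rfl | hj
  · have := inv_anti₀ (by positivity) (pow_le_pow_left₀ hδ.le hδy 2)
    simpa [inv_pow, sq_abs] using this
  · have hj1 : (1 : ℝ) ≤ |(j : ℝ)| := by exact_mod_cast Int.one_le_abs hj
    have hfar : ω * |(j : ℝ)| / 2 ≤ |y - ω * j| := by
      have := abs_sub_abs_le_abs_sub (ω * j) y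
      rw [abs_mul, abs_of_pos hω, abs_sub_comm] at this
      nlinarith
    calc (y - ω * j)⁻¹ ^ 2 = (|y - ω * j| ^ 2)⁻¹ := by rw [sq_abs, inv_pow]
      _ ≤ ((ω * |(j : ℝ)| / 2) ^ 2)⁻¹ :=
          inv_anti₀ (by positivity) (pow_le_pow_left₀ (by positivity) hfar 2)
      _ = _ := by rw [if_neg hj, div_pow, mul_pow, sq_abs]; field_simp; ring

lemma exists_tsum_inv_sub_mul_int_sq_le {ω δ : ℝ} (hω : 0 < ω) (hδ : 0 < δ) :
    ∃ B, ∀ x : ℝ, (∀ m : ℤ, δ ≤ |x - ω * m|) →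
      Summable (fun k : ℤ => (x - ω * k)⁻¹ ^ 2) ∧ ∑' k : ℤ, (x - ω * k)⁻¹ ^ 2 ≤ B := by
  set φ : ℤ → ℝ := fun j => (if j = 0 then (δ ^ 2)⁻¹ else 0) + 4 / ω ^ 2 * ((j : ℝ) ^ 2)⁻¹
  have hφ : Summable φ := (hasSum_ite_eq 0 _).summable.add <| .mul_left _ <| by
    simpa [one_div] using (summable_one_div_int_pow (p := 2)).mpr one_lt_two
  refine ⟨∑' j, φ j, fun x hx => ?_⟩
  -- centre the lattice at the point `ω * round (x / ω)` nearest to `x`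
  set k₀ := round (x / ω)
  have hy : |x - ω * k₀| ≤ ω / 2 := by
    have : x - ω * k₀ = ω * (x / ω - k₀) := by field_simp
    rw [this, abs_mul, abs_of_pos hω]
    nlinarith [abs_sub_round (x / ω)]
  have hshift (j : ℤ) : (x - ω * ↑(k₀ + j))⁻¹ ^ 2 = (x - ω * k₀ - ω * j)⁻¹ ^ 2 := by
    push_cast; ring_nf
  have hle (j : ℤ) : (x - ω * ↑(k₀ + j))⁻¹ ^ 2 ≤ φ j :=
    (hshift j).trans_le (inv_sub_mul_int_sq_le hω hδ (hx k₀) hy j)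
  have hsum : Summable (fun j : ℤ => (x - ω * ↑(k₀ + j))⁻¹ ^ 2) :=
    .of_nonneg_of_le (fun _ => sq_nonneg _) hle hφ
  refine ⟨(Equiv.addLeft k₀).summable_iff.mp hsum, ?_⟩
  rw [← (Equiv.addLeft k₀).tsum_eq]
  exact hsum.tsum_le_tsum hle hφ

lemma abs_mul_le_weighted_sq (a b : ℝ) {t : ℝ} (ht : 0 < t) :
    |a * b| ≤ (t * a ^ 2 + b ^ 2 / t) / 2 := by
  have key : (t * a ^ 2 + b ^ 2 / t) / 2 - |a * b| = (t * |a| - |b|) ^ 2 / (2 * t) := by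
    rw [abs_mul, ← sq_abs a, ← sq_abs b]; field_simp; ring
  have : 0 ≤ (t * |a| - |b|) ^ 2 / (2 * t) := by positivity
  linarith

section
variable {ι : Type*} {f g : ι → ℝ}

lemma summable_abs_mul_of_summable_sq (hf : Summable (fun i => f i ^ 2))
    (hg : Summable (fun i => g i ^ 2)) : Summable (fun i => |f i * g i|) :=
  .of_nonneg_of_le (fun _ => abs_nonneg _)
    (fun i => by simpa using abs_mul_le_weighted_sq (f i) (g i) one_pos) ((hf.add hg).div_const 2)

lemma tsum_abs_mul_le_weighted_sq (hf : Summable (fun i => f i ^ 2))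
    (hg : Summable (fun i => g i ^ 2)) {t : ℝ} (ht : 0 < t) :
    ∑' i, |f i * g i| ≤ (t * ∑' i, f i ^ 2 + (∑' i, g i ^ 2) / t) / 2 := by
  rw [← tsum_mul_left, ← tsum_div_const, ← Summable.tsum_add (hf.mul_left t) (hg.div_const t),
    ← tsum_div_const]
  exact (summable_abs_mul_of_summable_sq hf hg).tsum_le_tsum
    (fun i => abs_mul_le_weighted_sq (f i) (g i) ht)
    (((hf.mul_left t).add (hg.div_const t)).div_const 2)

end

lemma tendsto_abs_div_sub_comap_abs_atTop (c a : ℝ) :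
    Tendsto (fun x => |c / (x - a)|) (comap abs atTop) (𝓝 0) := by
  simp only [abs_div]
  refine tendsto_const_nhds.div_atTop (tendsto_atTop_mono (fun x => ?_)
    (tendsto_atTop_add_const_right _ (-|a|) tendsto_comap))
  linarith [abs_sub_abs_le_abs_sub x a]

theorem eventually_summable_and_tsum_abs_div_sub_mul_lt {ι : Type*} {n : ι → ℤ}
    (hn : Function.Injective n) {c : ι → ℝ} (hc : Summable (fun i => c i ^ 2)) {ω δ ε : ℝ}
    (hω : 0 < ω) (hδ : 0 < δ) (hε : 0 < ε) :
    ∀ᶠ x in comap abs atTop, (∀ m : ℤ, δ ≤ |x - ω * m|) →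
      Summable (fun i => |c i / (x - ω * n i)|) ∧ ∑' i, |c i / (x - ω * n i)| < ε := by
  obtain ⟨B, hB⟩ := exists_tsum_inv_sub_mul_int_sq_le hω hδ
  set t := 2 * (|B| + 1) / ε
  have ht : 0 < t := by positivity
  have hBt : B / t < ε / 2 := by
    have : ε / 2 * t = |B| + 1 := by simp only [t]; field_simp
    rw [div_lt_iff₀ ht, this]
    linarith [le_abs_self B]
  obtain ⟨s, hs⟩ : ∃ s : Finset ι, t * ∑' i : {i // i ∉ s}, c i ^ 2 < ε / 2 := by
    have := (tendsto_tsum_compl_atTop_zero fun i => c i ^ 2).const_mul t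
    rw [mul_zero] at this
    exact (this.eventually_lt_const (half_pos hε)).exists
  have hfin : ∀ᶠ x in comap abs atTop, ∑ i ∈ s, |c i / (x - ω * n i)| < ε / 2 := by
    have := tendsto_finsetSum s fun i _ => tendsto_abs_div_sub_comap_abs_atTop (c i) (ω * n i)
    rw [Finset.sum_const_zero] at this
    exact this.eventually_lt_const (half_pos hε)
  filter_upwards [hfin] with x hx hxδ
  obtain ⟨hL, hLB⟩ := hB x hxδ
  have hg : Summable (fun i => (x - ω * n i)⁻¹ ^ 2) := hL.comp_injective hn
  have hsum : Summable (fun i => |c i / (x - ω * n i)|) := by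
    simpa only [div_eq_mul_inv] using summable_abs_mul_of_summable_sq hc hg
  refine ⟨hsum, ?_⟩
  have htail : ∑' i : {i // i ∉ s}, |c i / (x - ω * n i)| ≤
      (t * ∑' i : {i // i ∉ s}, c i ^ 2 + (∑' i : {i // i ∉ s}, (x - ω * n i)⁻¹ ^ 2) / t) / 2 := by
    simpa only [div_eq_mul_inv] using tsum_abs_mul_le_weighted_sq (hc.subtype _) (hg.subtype _) ht
  have hG : ∑' i : {i // i ∉ s}, (x - ω * n i)⁻¹ ^ 2 ≤ B :=
    (tsum_comp_le_tsum_of_inj hL (fun _ => sq_nonneg _) (hn.comp Subtype.val_injective)).trans hLB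
  have hGt := div_le_div_of_nonneg_right hG ht.le
  rw [← hsum.sum_add_tsum_subtype_compl s]
  linarith

lemma summable_sq_of_eq_div_add_div {c a : ℤ → ℝ} {C : ℝ}
    (hc : ∀ k : ℤ, k ≠ 0 → c k = C / k + a k / k) (ha : Summable (fun k => a k ^ 2)) :
    Summable (fun k : {k : ℤ // k ≠ 0} => c k ^ 2) := by
  have hinv : Summable (fun k : ℤ => ((k : ℝ) ^ 2)⁻¹) := by
    simpa [one_div] using (summable_one_div_int_pow (p := 2)).mpr one_lt_two
  refine .of_nonneg_of_le (fun _ => sq_nonneg _) (fun k => ?_)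
    (((hinv.mul_left (2 * C ^ 2)).add (ha.mul_left 2)).subtype _)
  have hk : (1 : ℝ) ≤ (k : ℤ) ^ 2 :=
    (one_le_sq_iff_one_le_abs _).mpr (by exact_mod_cast Int.one_le_abs k.2)
  have hak : a k ^ 2 / (k : ℤ) ^ 2 ≤ a k ^ 2 := div_le_self (sq_nonneg _) hk
  rw [hc k k.2]
  calc (C / k + a k / k) ^ 2 ≤ 2 * (C / k) ^ 2 + 2 * (a k / k) ^ 2 := by
        nlinarith [sq_nonneg (C / k - a k / k)]
    _ ≤ 2 * C ^ 2 * ((k : ℤ) ^ 2 : ℝ)⁻¹ + 2 * a k ^ 2 := by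
        rw [div_pow, div_pow, div_eq_mul_inv (C ^ 2)]; linarith

lemma abs_tsum_le_tsum_abs {ι : Type*} {f : ι → ℝ} (hf : Summable (fun i => |f i|)) :
    |∑' i, f i| ≤ ∑' i, |f i| := by
  simpa only [Real.norm_eq_abs] using
    norm_tsum_le_tsum_norm (f := f) (by simpa only [Real.norm_eq_abs] using hf)

theorem stmt_14_general (c a : ℤ → ℝ) (C : ℝ)
    (hc : ∀ k : ℤ, k ≠ 0 → c k = C / k + a k / k)
    (ha : Summable (fun k => (a k) ^ 2)) :
    ∀ δ : ℝ, 0 < δ → ∃ R : ℝ, ∀ x : ℝ, R ≤ |x| →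
      (∀ m : ℤ, δ ≤ |x - π * m|) →
      |∑' k : {k : ℤ // k ≠ 0}, c k / (x - π * (k : ℤ))| < 1 / 2 ∧
      1 + ∑' k : {k : ℤ // k ≠ 0}, c k / (x - π * (k : ℤ)) ≠ 0 := by
  intro δ hδ
  have hev := eventually_summable_and_tsum_abs_div_sub_mul_lt Subtype.val_injective
      (summable_sq_of_eq_div_add_div hc ha) pi_pos hδ one_half_pos
  obtain ⟨R, -, hR⟩ := (atTop_basis.comap abs).eventually_iff.mp hev
  refine ⟨R, fun x hx hxδ => ?_⟩
  obtain ⟨hsum, hlt⟩ := hR hx hxδ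
  have hg : |∑' k : {k : ℤ // k ≠ 0}, c k / (x - π * (k : ℤ))| < 1 / 2 :=
    (abs_tsum_le_tsum_abs hsum).trans_lt hlt
  exact ⟨hg, fun h => by rw [abs_lt] at hg; linarith⟩

theorem stmt_14 (c a : ℤ → ℝ) (C : ℝ)
    (hc : ∀ k : ℤ, k ≠ 0 → c k = C / k + a k / k)
    (ha : Summable (fun k => (a k) ^ 2))
    (hconv : ∀ x : ℝ, (∀ m : ℤ, x ≠ π * m) →
      Summable (fun k : {k : ℤ // k ≠ 0} => c k / (x - π * (k : ℤ)))) :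
    ∀ δ : ℝ, 0 < δ → ∃ R : ℝ, ∀ x : ℝ, R ≤ |x| →
      (∀ m : ℤ, δ ≤ |x - π * m|) →
      |∑' k : {k : ℤ // k ≠ 0}, c k / (x - π * (k : ℤ))| < 1 / 2 ∧
      1 + ∑' k : {k : ℤ // k ≠ 0}, c k / (x - π * (k : ℤ)) ≠ 0 :=
  stmt_14_general c a C hc ha
end
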